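/- arXiv:0912.0798 — 6 statements merged into one kernel-verified Lean document; each statement's English description precedes it below -/
import Mathlib

section
/- The Malvenuto–Reutenauer product is associative: for permutations σ ∈ S_k, τ ∈ S_l, ρ ∈ S_m, one has (σ * τ) * ρ = σ * (τ * ρ) in the graded vector space ⊕_n k[S_n]. -/
open Equiv
set_option maxRecDepth 4000

/-- `σ` is the standardization of the tuple `u`: it preserves relative order. -/
def IsStd {k : ℕ} {α : Type*} [LinearOrder α] (u : Fin k → α) (σ : Equiv.Perm (Fin k)) : Prop :=
  ∀ i j, σ i < σ j ↔ u i < u j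

/-- The permutation `σ|_A . τ|_B` (concatenation), where `B = Aᶜ`: the first `k` values
are the elements of `A` arranged in the relative order prescribed by `σ`, and the last
`l` values are the elements of `Aᶜ` arranged in the relative order prescribed by `τ`. -/
def concatPerm {k l : ℕ} (σ : Equiv.Perm (Fin k)) (τ : Equiv.Perm (Fin l))
    (A : Finset (Fin (k + l))) (hA : A.card = k) : Equiv.Perm (Fin (k + l)) :=
  finSumFinEquiv.symm.trans
    ((Equiv.sumCongr (σ.trans (A.orderIsoOfFin hA).toEquiv)
        (τ.trans ((Aᶜ).orderIsoOfFin
          (by rw [Finset.card_compl, hA, Fintype.card_fin]; omega)).toEquiv)).trans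
      ((Equiv.sumCongr (Equiv.refl _)
          (Equiv.subtypeEquivRight (fun x => Finset.mem_compl))).trans
        (Equiv.sumCompl (· ∈ A))))

/-- The Malvenuto–Reutenauer product `σ * τ`, as the multiset of its summands:
`σ * τ = Σ_{A ⊔ B = {1,…,k+l}, |A| = k} σ|_A . τ|_B`. -/
def mrProd {k l : ℕ} (σ : Equiv.Perm (Fin k)) (τ : Equiv.Perm (Fin l)) :
    Multiset (Equiv.Perm (Fin (k + l))) :=
  (Finset.univ.filter (fun A : Finset (Fin (k + l)) => A.card = k)).attach.val.map
    (fun A => concatPerm σ τ A.1 (by have h := A.2; simp only [Finset.mem_filter] at h; exact h.2))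

theorem concatPerm_castAdd {k l : ℕ} (σ : Equiv.Perm (Fin k)) (τ : Equiv.Perm (Fin l))
    (A : Finset (Fin (k + l))) (hA : A.card = k) (i : Fin k) :
    concatPerm σ τ A hA (Fin.castAdd l i) = A.orderEmbOfFin hA (σ i) := by
  simp [concatPerm, Equiv.trans_apply]

theorem concatPerm_natAdd {k l : ℕ} (σ : Equiv.Perm (Fin k)) (τ : Equiv.Perm (Fin l))
    (A : Finset (Fin (k + l))) (hA : A.card = k) (hAc : (Aᶜ).card = l) (j : Fin l) :
    concatPerm σ τ A hA (Fin.natAdd k j) = (Aᶜ).orderEmbOfFin hAc (τ j) := by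
  simp [concatPerm, Equiv.trans_apply]

section Bij
variable {k l m : ℕ}

/-- orderEmbOfFin image of univ is the set itself. -/
theorem image_orderEmbOfFin_univ {n r : ℕ} (s : Finset (Fin n)) (h : s.card = r) :
    Finset.image (s.orderEmbOfFin h) Finset.univ = s := by
  apply Finset.eq_of_subset_of_card_le
  · intro x hx
    simp only [Finset.mem_image] at hx
    obtain ⟨i, -, rfl⟩ := hx
    exact Finset.orderEmbOfFin_mem s h i
  · rw [Finset.card_image_of_injective _ (s.orderEmbOfFin h).injective]
    simp [h]

theorem strictMono_finCongr {a b : ℕ} (h : a = b) : StrictMono (finCongr h) := by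
  intro x y hxy
  simp only [Fin.lt_def, finCongr_apply, Fin.coe_cast]
  exact hxy

variable (σ : Equiv.Perm (Fin k)) (τ : Equiv.Perm (Fin l)) (ρ : Equiv.Perm (Fin m))

def dD (A : Finset (Fin (k + l))) (hA : A.card = k)
    (B : Finset (Fin (k + l + m))) (hB : B.card = k + l) : Finset (Fin (k + (l + m))) :=
  Finset.image (fun i : Fin k =>
    finCongr (Nat.add_assoc k l m) (B.orderEmbOfFin hB (A.orderEmbOfFin hA i))) Finset.univ

theorem card_dD (A : Finset (Fin (k + l))) (hA : A.card = k)
    (B : Finset (Fin (k + l + m))) (hB : B.card = k + l) : (dD A hA B hB).card = k := by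
  rw [dD, Finset.card_image_of_injective _ (fun a b hab => by
    exact (A.orderEmbOfFin hA).injective ((B.orderEmbOfFin hB).injective
      ((finCongr (Nat.add_assoc k l m)).injective hab)))]
  simp

theorem card_dD_compl (A : Finset (Fin (k + l))) (hA : A.card = k)
    (B : Finset (Fin (k + l + m))) (hB : B.card = k + l) :
    ((dD A hA B hB)ᶜ).card = l + m := by
  rw [Finset.card_compl, card_dD, Fintype.card_fin]; omega

theorem dD_emb (A : Finset (Fin (k + l))) (hA : A.card = k)
    (B : Finset (Fin (k + l + m))) (hB : B.card = k + l) (i : Fin k) :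
    (dD A hA B hB).orderEmbOfFin (card_dD A hA B hB) i
      = finCongr (Nat.add_assoc k l m) (B.orderEmbOfFin hB (A.orderEmbOfFin hA i)) := by
  have := Finset.orderEmbOfFin_unique (card_dD A hA B hB)
    (f := fun i : Fin k =>
      finCongr (Nat.add_assoc k l m) (B.orderEmbOfFin hB (A.orderEmbOfFin hA i)))
    (fun i => by rw [dD]; exact Finset.mem_image_of_mem _ (Finset.mem_univ i))
    ((strictMono_finCongr _).comp
      ((B.orderEmbOfFin hB).strictMono.comp (A.orderEmbOfFin hA).strictMono))
  exact (congrFun this i).symm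

theorem mem_dD_compl_of_comp (A : Finset (Fin (k + l))) (hA : A.card = k)
    (hAc : (Aᶜ).card = l) (B : Finset (Fin (k + l + m))) (hB : B.card = k + l) (j : Fin l) :
    finCongr (Nat.add_assoc k l m) (B.orderEmbOfFin hB ((Aᶜ).orderEmbOfFin hAc j))
      ∈ (dD A hA B hB)ᶜ := by
  rw [Finset.mem_compl, dD, Finset.mem_image]
  rintro ⟨i, -, hi⟩
  have h2 := (B.orderEmbOfFin hB).injective ((finCongr (Nat.add_assoc k l m)).injective hi)
  have h3 : (Aᶜ).orderEmbOfFin hAc j ∈ Aᶜ := Finset.orderEmbOfFin_mem _ _ _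
  rw [← h2, Finset.mem_compl] at h3
  exact h3 (Finset.orderEmbOfFin_mem _ _ _)

def dC (A : Finset (Fin (k + l))) (hA : A.card = k) (hAc : (Aᶜ).card = l)
    (B : Finset (Fin (k + l + m))) (hB : B.card = k + l) : Finset (Fin (l + m)) :=
  Finset.image (fun j : Fin l =>
    (((dD A hA B hB)ᶜ).orderIsoOfFin (card_dD_compl A hA B hB)).symm
      ⟨finCongr (Nat.add_assoc k l m) (B.orderEmbOfFin hB ((Aᶜ).orderEmbOfFin hAc j)),
        mem_dD_compl_of_comp A hA hAc B hB j⟩) Finset.univ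

theorem card_dC (A : Finset (Fin (k + l))) (hA : A.card = k) (hAc : (Aᶜ).card = l)
    (B : Finset (Fin (k + l + m))) (hB : B.card = k + l) :
    (dC A hA hAc B hB).card = l := by
  rw [dC, Finset.card_image_of_injective _ (fun a b hab => by
    have h1 := (((dD A hA B hB)ᶜ).orderIsoOfFin (card_dD_compl A hA B hB)).symm.injective hab
    have h2 := Subtype.mk_eq_mk.mp h1
    exact ((Aᶜ).orderEmbOfFin hAc).injective ((B.orderEmbOfFin hB).injective
      ((finCongr (Nat.add_assoc k l m)).injective h2)))]
  simp

theorem dC_emb (A : Finset (Fin (k + l))) (hA : A.card = k) (hAc : (Aᶜ).card = l)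
    (B : Finset (Fin (k + l + m))) (hB : B.card = k + l) (j : Fin l) :
    ((dD A hA B hB)ᶜ).orderEmbOfFin (card_dD_compl A hA B hB)
        ((dC A hA hAc B hB).orderEmbOfFin (card_dC A hA hAc B hB) j)
      = finCongr (Nat.add_assoc k l m) (B.orderEmbOfFin hB ((Aᶜ).orderEmbOfFin hAc j)) := by
  set e := ((dD A hA B hB)ᶜ).orderIsoOfFin (card_dD_compl A hA B hB) with he
  have hsm : StrictMono (fun j : Fin l => e.symm
      ⟨finCongr (Nat.add_assoc k l m) (B.orderEmbOfFin hB ((Aᶜ).orderEmbOfFin hAc j)),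
        mem_dD_compl_of_comp A hA hAc B hB j⟩) := by
    intro a b hab
    dsimp only
    rw [e.symm.lt_iff_lt, Subtype.mk_lt_mk]
    exact (strictMono_finCongr _) ((B.orderEmbOfFin hB).strictMono
      (((Aᶜ).orderEmbOfFin hAc).strictMono hab))
  have := Finset.orderEmbOfFin_unique (card_dC A hA hAc B hB)
    (f := fun j : Fin l => e.symm
      ⟨finCongr (Nat.add_assoc k l m) (B.orderEmbOfFin hB ((Aᶜ).orderEmbOfFin hAc j)),
        mem_dD_compl_of_comp A hA hAc B hB j⟩)
    (fun j => by rw [dC]; exact Finset.mem_image_of_mem _ (Finset.mem_univ j)) hsm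
  have h2 := congrFun this j
  rw [← h2]
  have h3 : ∀ x : {y // y ∈ (dD A hA B hB)ᶜ},
      ((dD A hA B hB)ᶜ).orderEmbOfFin (card_dD_compl A hA B hB) (e.symm x) = x := by
    intro x
    rw [← Finset.coe_orderIsoOfFin_apply, ← he, e.apply_symm_apply]
  rw [h3]

theorem card_dC_compl (A : Finset (Fin (k + l))) (hA : A.card = k) (hAc : (Aᶜ).card = l)
    (B : Finset (Fin (k + l + m))) (hB : B.card = k + l) :
    ((dC A hA hAc B hB)ᶜ).card = m := by
  rw [Finset.card_compl, card_dC, Fintype.card_fin]; omega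

theorem mem_dD_compl_of_Bc (A : Finset (Fin (k + l))) (hA : A.card = k)
    (B : Finset (Fin (k + l + m))) (hB : B.card = k + l) (hBc : (Bᶜ).card = m) (j : Fin m) :
    finCongr (Nat.add_assoc k l m) ((Bᶜ).orderEmbOfFin hBc j) ∈ (dD A hA B hB)ᶜ := by
  rw [Finset.mem_compl, dD, Finset.mem_image]
  rintro ⟨i, -, hi⟩
  have h2 := (finCongr (Nat.add_assoc k l m)).injective hi
  have h3 : (Bᶜ).orderEmbOfFin hBc j ∈ Bᶜ := Finset.orderEmbOfFin_mem _ _ _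
  rw [← h2, Finset.mem_compl] at h3
  exact h3 (Finset.orderEmbOfFin_mem _ _ _)

theorem dCc_emb (A : Finset (Fin (k + l))) (hA : A.card = k) (hAc : (Aᶜ).card = l)
    (B : Finset (Fin (k + l + m))) (hB : B.card = k + l) (hBc : (Bᶜ).card = m) (j : Fin m) :
    ((dD A hA B hB)ᶜ).orderEmbOfFin (card_dD_compl A hA B hB)
        (((dC A hA hAc B hB)ᶜ).orderEmbOfFin (card_dC_compl A hA hAc B hB) j)
      = finCongr (Nat.add_assoc k l m) ((Bᶜ).orderEmbOfFin hBc j) := by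
  set e := ((dD A hA B hB)ᶜ).orderIsoOfFin (card_dD_compl A hA B hB) with he
  have hmem : ∀ j : Fin m, e.symm
      ⟨finCongr (Nat.add_assoc k l m) ((Bᶜ).orderEmbOfFin hBc j),
        mem_dD_compl_of_Bc A hA B hB hBc j⟩ ∈ (dC A hA hAc B hB)ᶜ := by
    intro j
    rw [Finset.mem_compl, dC, Finset.mem_image]
    rintro ⟨j', -, hj'⟩
    have h1 := Subtype.mk_eq_mk.mp (e.symm.injective hj')
    have h2 := (finCongr (Nat.add_assoc k l m)).injective h1
    have h3 : (Bᶜ).orderEmbOfFin hBc j ∈ Bᶜ := Finset.orderEmbOfFin_mem _ _ _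
    rw [← h2, Finset.mem_compl] at h3
    exact h3 (Finset.orderEmbOfFin_mem _ _ _)
  have hsm : StrictMono (fun j : Fin m => e.symm
      ⟨finCongr (Nat.add_assoc k l m) ((Bᶜ).orderEmbOfFin hBc j),
        mem_dD_compl_of_Bc A hA B hB hBc j⟩) := by
    intro a b hab
    dsimp only
    rw [e.symm.lt_iff_lt, Subtype.mk_lt_mk]
    exact (strictMono_finCongr _) (((Bᶜ).orderEmbOfFin hBc).strictMono hab)
  have := Finset.orderEmbOfFin_unique (card_dC_compl A hA hAc B hB)
    (f := fun j : Fin m => e.symm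
      ⟨finCongr (Nat.add_assoc k l m) ((Bᶜ).orderEmbOfFin hBc j),
        mem_dD_compl_of_Bc A hA B hB hBc j⟩) hmem hsm
  have h2 := congrFun this j
  rw [← h2]
  have h3 : ∀ x : {y // y ∈ (dD A hA B hB)ᶜ},
      ((dD A hA B hB)ᶜ).orderEmbOfFin (card_dD_compl A hA B hB) (e.symm x) = x := by
    intro x
    rw [← Finset.coe_orderIsoOfFin_apply, ← he, e.apply_symm_apply]
  rw [h3]

end Bij

theorem key_perm_eq {k l m : ℕ} (σ : Equiv.Perm (Fin k)) (τ : Equiv.Perm (Fin l))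
    (ρ : Equiv.Perm (Fin m)) (A : Finset (Fin (k + l))) (hA : A.card = k)
    (hAc : (Aᶜ).card = l) (B : Finset (Fin (k + l + m))) (hB : B.card = k + l)
    (hBc : (Bᶜ).card = m) :
    (finCongr (Nat.add_assoc k l m)).permCongr (concatPerm (concatPerm σ τ A hA) ρ B hB)
      = concatPerm σ (concatPerm τ ρ (dC A hA hAc B hB) (card_dC A hA hAc B hB))
          (dD A hA B hB) (card_dD A hA B hB) := by
  apply Equiv.ext
  intro x
  refine Fin.addCases ?_ ?_ x
  · intro i
    have h1 : (finCongr (Nat.add_assoc k l m)).symm (Fin.castAdd (l + m) i)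
        = Fin.castAdd m (Fin.castAdd l i) := by
      apply Fin.ext; simp
    rw [Equiv.permCongr_apply, h1, concatPerm_castAdd, concatPerm_castAdd,
      concatPerm_castAdd, dD_emb]
  · intro y
    refine Fin.addCases ?_ ?_ y
    · intro j
      have h1 : (finCongr (Nat.add_assoc k l m)).symm (Fin.natAdd k (Fin.castAdd m j))
          = Fin.castAdd m (Fin.natAdd k j) := by
        apply Fin.ext; simp
      rw [Equiv.permCongr_apply, h1, concatPerm_castAdd,
        concatPerm_natAdd σ τ A hA hAc, concatPerm_natAdd σ _ _ _ (card_dD_compl A hA B hB),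
        concatPerm_castAdd, dC_emb A hA hAc B hB]
    · intro j
      have h1 : (finCongr (Nat.add_assoc k l m)).symm (Fin.natAdd k (Fin.natAdd l j))
          = Fin.natAdd (k + l) j := by
        apply Fin.ext; simp [Nat.add_assoc]
      rw [Equiv.permCongr_apply, h1, concatPerm_natAdd _ _ _ _ hBc,
        concatPerm_natAdd σ _ _ _ (card_dD_compl A hA B hB),
        concatPerm_natAdd τ ρ _ _ (card_dC_compl A hA hAc B hB),
        dCc_emb A hA hAc B hB hBc]

theorem mrProd_eq {k l : ℕ} (σ : Equiv.Perm (Fin k)) (τ : Equiv.Perm (Fin l)) :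
    mrProd σ τ = (Finset.univ.filter fun A : Finset (Fin (k + l)) => A.card = k).val.map
      (fun A => if h : A.card = k then concatPerm σ τ A h else 1) := by
  rw [mrProd,
    ← Multiset.attach_map_val' _ (fun A => if h : A.card = k then concatPerm σ τ A h else 1)]
  apply Multiset.map_congr rfl
  intro x hx
  have h : x.1.card = k := by have := x.2; simp only [Finset.mem_filter] at this; exact this.2
  rw [dif_pos h]

theorem bind_eq_prod_map {α β γ : Type*} (s : Finset α) (t : Finset β) (F : α → β → γ) :
    (s.val.bind fun a => t.val.map (F a)) = (s ×ˢ t).val.map (fun p => F p.1 p.2) := by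
  rw [Finset.product_val]
  show _ = (Multiset.product s.val t.val).map _
  rw [Multiset.product, Multiset.map_bind]
  simp [Multiset.map_map, Function.comp]

theorem map_val_map_eq {α β γ : Type*} [DecidableEq β] (s : Finset α) (t : Finset β)
    (F : α → β) (f : α → γ) (g : β → γ) (hinj : Set.InjOn F s) (himg : s.image F = t)
    (hfg : ∀ a ∈ s, f a = g (F a)) : s.val.map f = t.val.map g := by
  rw [← himg, Finset.image_val_of_injOn hinj, Multiset.map_map]
  exact Multiset.map_congr rfl (fun a ha => hfg a ha)

theorem orderEmbOfFin_congr {α : Type*} [LinearOrder α] {s t : Finset α} (hst : s = t) {r : ℕ}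
    (hs : s.card = r) (ht : t.card = r) (i : Fin r) :
    s.orderEmbOfFin hs i = t.orderEmbOfFin ht i := by subst hst; rfl

theorem card_filter_card (n r : ℕ) :
    (Finset.univ.filter fun A : Finset (Fin n) => A.card = r).card = n.choose r := by
  have : (Finset.univ.filter fun A : Finset (Fin n) => A.card = r)
      = Finset.powersetCard r Finset.univ := by
    ext A
    simp [Finset.mem_powersetCard, Finset.subset_univ]
  rw [this, Finset.card_powersetCard, Finset.card_univ, Fintype.card_fin]

theorem choose_identity (k l m : ℕ) :
    (k + l).choose k * ((k + l + m).choose (k + l))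
      = (l + m).choose l * ((k + (l + m)).choose k) := by
  have e1 : (k + l).choose k * k.factorial * l.factorial = (k + l).factorial := by
    rw [Nat.choose_symm_add]; exact Nat.add_choose_mul_factorial_mul_factorial k l
  have e2 : (k + l + m).choose (k + l) * (k + l).factorial * m.factorial
      = (k + l + m).factorial := by
    rw [Nat.choose_symm_add]; exact Nat.add_choose_mul_factorial_mul_factorial (k + l) m
  have e3 : (l + m).choose l * l.factorial * m.factorial = (l + m).factorial := by
    rw [Nat.choose_symm_add]; exact Nat.add_choose_mul_factorial_mul_factorial l m
  have e4 : (k + (l + m)).choose k * k.factorial * (l + m).factorial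
      = (k + (l + m)).factorial := by
    rw [Nat.choose_symm_add]; exact Nat.add_choose_mul_factorial_mul_factorial k (l + m)
  apply Nat.eq_of_mul_eq_mul_right
    (show 0 < k.factorial * (l.factorial * m.factorial) from
      Nat.mul_pos (Nat.factorial_pos k) (Nat.mul_pos (Nat.factorial_pos l) (Nat.factorial_pos m)))
  calc (k + l).choose k * ((k + l + m).choose (k + l))
        * (k.factorial * (l.factorial * m.factorial))
      = (k + l + m).choose (k + l) * ((k + l).choose k * k.factorial * l.factorial)
          * m.factorial := by ring
    _ = (k + l + m).choose (k + l) * (k + l).factorial * m.factorial := by rw [e1]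
    _ = (k + l + m).factorial := e2
    _ = (k + (l + m)).factorial := by rw [Nat.add_assoc]
    _ = (k + (l + m)).choose k * k.factorial * (l + m).factorial := e4.symm
    _ = (k + (l + m)).choose k * k.factorial
          * ((l + m).choose l * l.factorial * m.factorial) := by rw [e3]
    _ = (l + m).choose l * ((k + (l + m)).choose k)
          * (k.factorial * (l.factorial * m.factorial)) := by ring

theorem card_compl_left {k l : ℕ} {A : Finset (Fin (k + l))} (hA : A.card = k) :
    (Aᶜ).card = l := by
  rw [Finset.card_compl, hA, Fintype.card_fin]; omega

theorem card_compl_left' {k l m : ℕ} {B : Finset (Fin (k + l + m))} (hB : B.card = k + l) :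
    (Bᶜ).card = m := by
  rw [Finset.card_compl, hB, Fintype.card_fin]; omega

def Fmap (k l m : ℕ) (p : Finset (Fin (k + l)) × Finset (Fin (k + l + m))) :
    Finset (Fin (l + m)) × Finset (Fin (k + (l + m))) :=
  if h : p.1.card = k ∧ p.2.card = k + l then
    (dC p.1 h.1 (card_compl_left h.1) p.2 h.2, dD p.1 h.1 p.2 h.2)
  else (∅, ∅)

theorem Fmap_injOn (k l m : ℕ) :
    Set.InjOn (Fmap k l m)
      (((Finset.univ.filter fun A : Finset (Fin (k + l)) => A.card = k) ×ˢ
        (Finset.univ.filter fun B : Finset (Fin (k + l + m)) => B.card = k + l) :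
          Finset _) : Set _) := by
  rintro ⟨A, B⟩ hp ⟨A', B'⟩ hq heq
  simp only [Finset.mem_coe, Finset.mem_product, Finset.mem_filter,
    Finset.mem_univ, true_and] at hp hq
  obtain ⟨hA, hB⟩ := hp
  obtain ⟨hA', hB'⟩ := hq
  rw [Fmap, Fmap, dif_pos (show (A, B).1.card = k ∧ (A, B).2.card = k + l from ⟨hA, hB⟩),
    dif_pos (show (A', B').1.card = k ∧ (A', B').2.card = k + l from ⟨hA', hB'⟩),
    Prod.mk.injEq] at heq
  obtain ⟨hCeq, hDeq⟩ := heq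
  have h1 : ∀ i : Fin k, B.orderEmbOfFin hB (A.orderEmbOfFin hA i)
      = B'.orderEmbOfFin hB' (A'.orderEmbOfFin hA' i) := by
    intro i
    apply (finCongr (Nat.add_assoc k l m)).injective
    exact (dD_emb A hA B hB i).symm.trans
      ((orderEmbOfFin_congr hDeq (card_dD A hA B hB) (card_dD A' hA' B' hB') i).trans
        (dD_emb A' hA' B' hB' i))
  have h2 : ∀ j : Fin l, B.orderEmbOfFin hB ((Aᶜ).orderEmbOfFin (card_compl_left hA) j)
      = B'.orderEmbOfFin hB' ((A'ᶜ).orderEmbOfFin (card_compl_left hA') j) := by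
    intro j
    apply (finCongr (Nat.add_assoc k l m)).injective
    refine (dC_emb A hA (card_compl_left hA) B hB j).symm.trans
      (Eq.trans ?_ (dC_emb A' hA' (card_compl_left hA') B' hB' j))
    rw [orderEmbOfFin_congr hCeq (card_dC A hA (card_compl_left hA) B hB)
      (card_dC A' hA' (card_compl_left hA') B' hB') j]
    exact orderEmbOfFin_congr (by rw [hDeq]) _ _ _
  have imgB : ∀ (X : Finset (Fin (k + l + m))) (hX : X.card = k + l)
      (Y : Finset (Fin (k + l))) (hY : Y.card = k),
      X = Finset.image (fun i : Fin k => X.orderEmbOfFin hX (Y.orderEmbOfFin hY i))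
            Finset.univ
          ∪ Finset.image (fun j : Fin l =>
              X.orderEmbOfFin hX ((Yᶜ).orderEmbOfFin (card_compl_left hY) j)) Finset.univ := by
    intro X hX Y hY
    calc X = Finset.image (X.orderEmbOfFin hX) Finset.univ :=
            (image_orderEmbOfFin_univ X hX).symm
      _ = Finset.image (X.orderEmbOfFin hX) (Y ∪ Yᶜ) := by rw [Finset.union_compl]
      _ = Finset.image (X.orderEmbOfFin hX) Y ∪ Finset.image (X.orderEmbOfFin hX) (Yᶜ) :=
            Finset.image_union _ _
      _ = Finset.image (X.orderEmbOfFin hX) (Finset.image (Y.orderEmbOfFin hY) Finset.univ)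
            ∪ Finset.image (X.orderEmbOfFin hX)
              (Finset.image ((Yᶜ).orderEmbOfFin (card_compl_left hY)) Finset.univ) := by
            rw [image_orderEmbOfFin_univ Y hY,
              image_orderEmbOfFin_univ (Yᶜ) (card_compl_left hY)]
      _ = _ := by rw [Finset.image_image, Finset.image_image]; rfl
  have hBB : B = B' := by
    rw [imgB B hB A hA, imgB B' hB' A' hA',
      Finset.image_congr (fun i _ => h1 i), Finset.image_congr (fun j _ => h2 j)]
  have hAA : A = A' := by
    have hAemb : ∀ i : Fin k, A.orderEmbOfFin hA i = A'.orderEmbOfFin hA' i := by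
      intro i
      apply (B.orderEmbOfFin hB).injective
      rw [h1 i]
      exact (orderEmbOfFin_congr hBB hB hB' _).symm
    rw [← image_orderEmbOfFin_univ A hA, ← image_orderEmbOfFin_univ A' hA',
      Finset.image_congr (fun i _ => hAemb i)]
  rw [hAA, hBB]

theorem Fmap_image (k l m : ℕ) :
    (((Finset.univ.filter fun A : Finset (Fin (k + l)) => A.card = k) ×ˢ
        (Finset.univ.filter fun B : Finset (Fin (k + l + m)) => B.card = k + l)).image
          (Fmap k l m))
      = (Finset.univ.filter fun C : Finset (Fin (l + m)) => C.card = l) ×ˢ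
          (Finset.univ.filter fun D : Finset (Fin (k + (l + m))) => D.card = k) := by
  apply Finset.eq_of_subset_of_card_le
  · intro q hq
    simp only [Finset.mem_image] at hq
    obtain ⟨p, hp, rfl⟩ := hq
    simp only [Finset.mem_product, Finset.mem_filter, Finset.mem_univ, true_and] at hp ⊢
    rw [Fmap, dif_pos hp]
    exact ⟨card_dC _ _ _ _ _, card_dD _ _ _ _⟩
  · rw [Finset.card_image_of_injOn (Fmap_injOn k l m), Finset.card_product,
      Finset.card_product, card_filter_card, card_filter_card, card_filter_card,
      card_filter_card]
    exact le_of_eq (choose_identity k l m).symm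

/-- The Malvenuto–Reutenauer product is associative: `(σ * τ) * ρ = σ * (τ * ρ)` in
`⊕_n k[S_n]` (stated as an equality of the multisets of basis summands, transported
along the canonical identification `Fin ((k+l)+m) ≃ Fin (k+(l+m))`). -/
theorem mrProd_assoc {k l m : ℕ} (σ : Equiv.Perm (Fin k)) (τ : Equiv.Perm (Fin l))
    (ρ : Equiv.Perm (Fin m)) :
    ((mrProd σ τ).bind fun π => mrProd π ρ).map
        (fun π => (finCongr (Nat.add_assoc k l m)).permCongr π)
      = (mrProd τ ρ).bind fun π => mrProd σ π := by
  simp only [mrProd_eq, Multiset.bind_map, Multiset.map_bind, Multiset.map_map]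
  rw [bind_eq_prod_map, bind_eq_prod_map]
  refine map_val_map_eq _ _ (Fmap k l m) _ _ (Fmap_injOn k l m) (Fmap_image k l m) ?_
  rintro ⟨A, B⟩ hp
  simp only [Finset.mem_product, Finset.mem_filter, Finset.mem_univ, true_and] at hp
  obtain ⟨hA, hB⟩ := hp
  simp only [Function.comp_apply]
  have hF : Fmap k l m (A, B)
      = (dC A hA (card_compl_left hA) B hB, dD A hA B hB) := by
    rw [Fmap]
    exact dif_pos (show (A, B).1.card = k ∧ (A, B).2.card = k + l from ⟨hA, hB⟩)
  rw [hF]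
  simp only
  rw [dif_pos hB, dif_pos hA, dif_pos (card_dD A hA B hB),
    dif_pos (card_dC A hA (card_compl_left hA) B hB)]
  exact key_perm_eq σ τ ρ A hA (card_compl_left hA) B hB (card_compl_left' hB)
end

section
/- For σ ∈ S_k and τ ∈ S_l, the product σ * τ in the Malvenuto–Reutenauer algebra is a sum of exactly binomial(k+l, k) permutations of S_{k+l}, each appearing with coefficient 1 (all summands are distinct). -/
open Equiv

lemma concatPerm_castAdd_mem {k l : ℕ} (σ : Equiv.Perm (Fin k)) (τ : Equiv.Perm (Fin l))
    (A : Finset (Fin (k + l))) (hA : A.card = k) (i : Fin k) :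
    concatPerm σ τ A hA (Fin.castAdd l i) ∈ A := by
  simp [concatPerm]

lemma concatPerm_image {k l : ℕ} (σ : Equiv.Perm (Fin k)) (τ : Equiv.Perm (Fin l))
    (A : Finset (Fin (k + l))) (hA : A.card = k) :
    A = Finset.image (fun i : Fin k => concatPerm σ τ A hA (Fin.castAdd l i)) Finset.univ := by
  symm
  apply Finset.eq_of_subset_of_card_le
  · intro x hx
    simp only [Finset.mem_image] at hx
    obtain ⟨i, _, rfl⟩ := hx
    exact concatPerm_castAdd_mem σ τ A hA i
  · rw [hA, Finset.card_image_of_injective _ (fun a b h => by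
      have := (concatPerm σ τ A hA).injective h
      exact Fin.castAdd_injective _ _ this), Finset.card_univ, Fintype.card_fin]

/-- The product `σ * τ` is a sum of exactly `(k+l).choose k` permutations of `S_{k+l}`,
each appearing with coefficient `1` (all summands are distinct). -/
theorem mrProd_card_nodup {k l : ℕ} (σ : Equiv.Perm (Fin k)) (τ : Equiv.Perm (Fin l)) :
    Multiset.card (mrProd σ τ) = (k + l).choose k ∧ (mrProd σ τ).Nodup := by
  constructor
  · rw [mrProd, Multiset.card_map]
    have : (Finset.univ.filter (fun A : Finset (Fin (k + l)) => A.card = k)) =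
        Finset.powersetCard k Finset.univ := by
      rw [Finset.powersetCard_eq_filter, Finset.powerset_univ]
    rw [← Finset.card_def, Finset.card_attach, this, Finset.card_powersetCard, Finset.card_univ, Fintype.card_fin]
  · rw [mrProd]
    apply Multiset.Nodup.map _ (Finset.attach _).nodup
    rintro ⟨A, hA⟩ ⟨B, hB⟩ h
    simp only [Finset.mem_filter] at hA hB
    ext : 1
    simp only
    rw [concatPerm_image σ τ A hA.2, concatPerm_image σ τ B hB.2]
    congr 1
    funext i
    exact DFunLike.congr_fun h (Fin.castAdd l i)
end

section
/- The number of Catalan alternative tableaux of size n is the Catalan number C_{n+1} = (1/(n+2)) · binomial(2n+2, n+1). -/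
/-- A Catalan alternative tableau of size `n`.

The shape is a path of `n` steps from the vertical axis to the horizontal axis;
`shape s = true` means the `s`-th step is vertical (down, read as `+1`) and
`shape s = false` means it is horizontal (right, read as `-1`).  The cells of the
tableau are the pairs `(c, r)` where `c` is a horizontal step, `r` is a vertical step
and `c` occurs before `r` on the path (`c` indexes the column, `r` the row of the cell;
smaller `c` means further left, smaller `r` means higher up).

`dots c r = some true` means a red dot in cell `(c, r)`, `some false` a blue dot,
`none` no dot.  The axioms say: dots lie only in cells; no dot lies (strictly) below a
red dot; no dot lies (strictly) to the left of a blue dot; and every cell is below a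
red dot or to the left of a blue dot (a dotted cell covering itself). -/

structure CatAltTableau (n : ℕ) where
  shape : Fin n → Bool
  dots : Fin n → Fin n → Option Bool
  dots_mem_cells : ∀ c r, dots c r ≠ none → shape c = false ∧ shape r = true ∧ c < r
  no_dot_below_red : ∀ c r r', dots c r = some true → r < r' → dots c r' = none
  no_dot_left_of_blue : ∀ c r c', dots c r = some false → c' < c → dots c' r = none
  cover : ∀ c r, shape c = false → shape r = true → c < r →
    (∃ r₀, r₀ ≤ r ∧ dots c r₀ = some true) ∨ (∃ c₀, c ≤ c₀ ∧ dots c₀ r = some false)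

/-!
Record a tableau as the word of its path steps, marking each column with the row of its red dot
(a column has at most one, as no dot lies below a red one). The blue dots are then forced: the blue
dot of a row sits in its rightmost cell with no red dot in or above it. The words arising this way
(`IsCode`) are those in which every column strictly between a red dot's column and its row has a
red dot in or above that row. Seen from inside such an arc, the columns with a red dot in its
closing row behave like columns without red dot, so the codes obey the grammar
`K = ε | row K | free K | arc K row K`. Hence codes of length `n` correspond to binary trees with
`n + 1` nodes, which are counted by the Catalan number `C (n + 1)`.
-/

-- A step of the path: `row` is a vertical step; a horizontal step is `arc d` if its column
-- has a red dot, in the row `d + 1` steps later, and `free` otherwise.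
inductive Letter
  | row
  | free
  | arc (d : ℕ)

namespace Letter

def closeAt (k : ℕ) : Letter → Letter
  | row => row
  | free => arc k
  | arc d => arc d

def openAt (k : ℕ) : Letter → Letter
  | row => row
  | free => free
  | arc d => if d = k then free else arc d

theorem openAt_eq_arc {k e : ℕ} {x : Letter} : x.openAt k = arc e ↔ x = arc e ∧ e ≠ k := by
  cases x with
  | row | free => simp [openAt]
  | arc d => by_cases hd : d = k <;> simp [openAt, hd] <;> omega

end Letter

open Letter

def IsCode (l : List Letter) : Prop :=
  ∀ i d, l[i]? = some (arc d) → l[i + d + 1]? = some row ∧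
    ∀ j, i < j → j ≤ i + d → l[j]? ≠ some free ∧ ∀ e, l[j]? = some (arc e) → j + e ≤ i + d

namespace IsCode

variable {l u v : List Letter}

theorem lt_length (h : IsCode l) {i d : ℕ} (hi : l[i]? = some (arc d)) : i + d + 1 < l.length :=
  (List.getElem?_eq_some_iff.1 (h i d hi).1).1

theorem row_of_arc (hl : IsCode l) {c r : ℕ} (hcr : c < r)
    (hc : l[c]? = some (.arc (r - c - 1))) : l[r]? = some .row := by
  simpa [show c + (r - c - 1) + 1 = r by omega] using (hl c _ hc).1

theorem exists_arc_of_lt_arc (hl : IsCode l) {c r c' : ℕ}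
    (hcr : c < r) (hc : l[c]? = some (.arc (r - c - 1))) (hcc' : c < c') (hc'r : c' < r)
    (hc' : l[c']? ≠ some .row) : ∃ r' ≤ r, c' < r' ∧ l[c']? = some (.arc (r' - c' - 1)) := by
  obtain ⟨hfree, harc⟩ := (hl c _ hc).2 c' hcc' (by omega)
  have hlen : c' < l.length := (List.getElem?_eq_some_iff.1 (hl.row_of_arc hcr hc)).1.trans' hc'r
  rcases hx : l[c']? with _ | _ | _ | e
  · rw [List.getElem?_eq_none_iff] at hx
    omega
  · exact absurd hx hc'
  · exact absurd hx hfree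
  · have := harc e hx
    exact ⟨c' + e + 1, by omega, by omega, by congr 2; omega⟩

theorem drop (h : IsCode l) (m : ℕ) : IsCode (l.drop m) := by
  intro i d hi
  rw [List.getElem?_drop] at hi
  obtain ⟨hrow, hnest⟩ := h (m + i) d hi
  refine ⟨by rwa [List.getElem?_drop, ← Nat.add_assoc, ← Nat.add_assoc], fun j hij hjd => ?_⟩
  rw [List.getElem?_drop]
  obtain ⟨hfree, harc⟩ := hnest (m + j) (by omega) (by omega)
  exact ⟨hfree, fun e he => by have := harc e he; omega⟩

theorem append (hu : IsCode u) (hv : IsCode v) : IsCode (u ++ v) := by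
  intro i d hi
  by_cases hiu : i < u.length
  · rw [List.getElem?_append_left hiu] at hi
    have hlt := hu.lt_length hi
    obtain ⟨hrow, hnest⟩ := hu i d hi
    refine ⟨by rwa [List.getElem?_append_left hlt], fun j hij hjd => ?_⟩
    rw [List.getElem?_append_left (by omega)]
    exact hnest j hij hjd
  · rw [List.getElem?_append_right (by omega)] at hi
    obtain ⟨hrow, hnest⟩ := hv _ d hi
    refine ⟨?_, fun j hij hjd => ?_⟩
    · rwa [List.getElem?_append_right (by omega), show i + d + 1 - u.length =
        i - u.length + d + 1 by omega]
    · rw [List.getElem?_append_right (by omega)]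
      obtain ⟨hfree, harc⟩ := hnest (j - u.length) (by omega) (by omega)
      exact ⟨hfree, fun e he => by have := harc e he; omega⟩

end IsCode

theorem isCode_singleton {x : Letter} (hx : ∀ d, x ≠ arc d) : IsCode [x] := by
  intro i d hi
  rcases i with _ | i
  · exact absurd (Option.some_inj.1 hi) (hx d)
  · simp at hi

-- Inside an arc closing just after `w`, the free columns of `w` get their red dots in the
-- closing row.
def closeFree (w : List Letter) : List Letter :=
  w.mapIdx fun j x => x.closeAt (w.length - j - 1)

def openEnd (u : List Letter) : List Letter :=
  u.mapIdx fun j x => x.openAt (u.length - j - 1)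

section CloseFree

variable {w : List Letter}

@[simp]
theorem length_closeFree : (closeFree w).length = w.length := List.length_mapIdx

theorem getElem?_closeFree (j : ℕ) :
    (closeFree w)[j]? = w[j]?.map (closeAt (w.length - j - 1)) :=
  List.getElem?_mapIdx

theorem getElem?_openEnd (j : ℕ) :
    (openEnd w)[j]? = w[j]?.map (openAt (w.length - j - 1)) :=
  List.getElem?_mapIdx

theorem getElem?_closeFree_of_ne_free {j : ℕ} (h : w[j]? ≠ some free) :
    (closeFree w)[j]? = w[j]? := by
  rw [getElem?_closeFree]
  rcases hx : w[j]? with _ | _ | _ | _ <;> simp_all [closeAt]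

theorem IsCode.closeFree_inside (hw : IsCode w) (j : ℕ) :
    (closeFree w)[j]? ≠ some free ∧ ∀ e, (closeFree w)[j]? = some (arc e) → j + e < w.length := by
  rw [getElem?_closeFree]
  refine ⟨fun h => ?_, fun e h => ?_⟩
  · obtain ⟨x, -, hx⟩ := Option.map_eq_some_iff.1 h
    cases x <;> simp [closeAt] at hx
  · obtain ⟨x, hjx, hx⟩ := Option.map_eq_some_iff.1 h
    have hj := (List.getElem?_eq_some_iff.1 hjx).1
    cases x with
    | row => simp [closeAt] at hx
    | free =>
      simp only [closeAt, arc.injEq] at hx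
      omega
    | arc d =>
      simp only [closeAt, arc.injEq] at hx
      have := hw.lt_length hjx
      omega

theorem IsCode.arc_closeFree (hw : IsCode w) :
    IsCode (arc w.length :: (closeFree w ++ [row])) := by
  set L := arc w.length :: (closeFree w ++ [row]) with hL
  have hend : L[w.length + 1]? = some row := by simp [L]
  have hmid : ∀ j < w.length, L[j + 1]? = (closeFree w)[j]? := fun j hj => by
    rw [hL, List.getElem?_cons_succ, List.getElem?_append_left (by simpa using hj)]
  have hinside : ∀ j, 0 < j → j ≤ w.length →
      L[j]? ≠ some free ∧ ∀ e, L[j]? = some (arc e) → j + e ≤ w.length := by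
    intro j hj hjw
    obtain ⟨j, rfl⟩ : ∃ j', j = j' + 1 := ⟨j - 1, by omega⟩
    rw [hmid j (by omega)]
    obtain ⟨hfree, harc⟩ := hw.closeFree_inside j
    exact ⟨hfree, fun e he => by have := harc e he; omega⟩
  intro i d hi
  rcases i with _ | i
  · obtain rfl : w.length = d := by simpa [L] using hi
    simpa using ⟨hend, hinside⟩
  have hiw : i < w.length := by
    have hlt : i < w.length + 1 := by simpa [L] using (List.getElem?_eq_some_iff.1 hi).1
    refine lt_of_le_of_ne (by omega) fun h => ?_
    rw [h, hend] at hi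
    simp at hi
  rw [hmid i hiw, getElem?_closeFree] at hi
  obtain ⟨x, hx, hxd⟩ := Option.map_eq_some_iff.1 hi
  cases x with
  | row => simp [closeAt] at hxd
  | free =>
    obtain rfl : w.length - i - 1 = d := by simpa [closeAt] using hxd
    refine ⟨by rwa [show i + 1 + (w.length - i - 1) + 1 = w.length + 1 by omega], ?_⟩
    intro j hj hjd
    obtain ⟨hfree, harc⟩ := hinside j (by omega) (by omega)
    exact ⟨hfree, fun e he => by have := harc e he; omega⟩
  | arc d' =>
    obtain rfl : d' = d := by simpa [closeAt] using hxd
    obtain ⟨hrow, hnest⟩ := hw i d' hx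
    refine ⟨?_, fun j hj hjd => ?_⟩
    · rw [show i + 1 + d' + 1 = i + d' + 1 + 1 by omega, hmid _ (hw.lt_length hx),
        getElem?_closeFree_of_ne_free (by simp [hrow]), hrow]
    · obtain ⟨j, rfl⟩ : ∃ j', j = j' + 1 := ⟨j - 1, by omega⟩
      obtain ⟨hfree, harc⟩ := hnest j (by omega) (by omega)
      rw [hmid j (by have := hw.lt_length hx; omega), getElem?_closeFree_of_ne_free hfree]
      exact ⟨hfree, fun e he => by have := harc e he; omega⟩

theorem IsCode.openEnd_closeFree (hw : IsCode w) : openEnd (closeFree w) = w := by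
  apply List.ext_getElem?
  intro j
  rw [getElem?_openEnd, getElem?_closeFree, Option.map_map, length_closeFree]
  rcases hx : w[j]? with _ | _ | _ | e
  · rfl
  · rfl
  · simp [closeAt, openAt]
  · have := hw.lt_length hx
    simp only [Option.map_some, Function.comp_apply, closeAt, openAt]
    rw [if_neg (by omega)]

end CloseFree

section HeadArc

variable {d : ℕ} {l : List Letter}

theorem IsCode.inside_head_arc (h : IsCode (arc d :: l)) {j : ℕ} (hj : j < d) :
    l[j]? ≠ some free ∧ ∀ e, l[j]? = some (arc e) → j + e < d := by
  obtain ⟨hfree, harc⟩ := (h 0 d rfl).2 (j + 1) (by omega) (by omega)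
  exact ⟨hfree, fun e he => by have := harc e he; omega⟩

theorem IsCode.isCode_openEnd_take (h : IsCode (arc d :: l)) : IsCode (openEnd (l.take d)) := by
  intro i e hi
  rw [getElem?_openEnd] at hi
  obtain ⟨x, hx, hxe⟩ := Option.map_eq_some_iff.1 hi
  obtain ⟨rfl, hne⟩ := openAt_eq_arc.1 hxe
  have hid : i < d := (List.getElem?_eq_some_iff.1 hx).1.trans_le (List.length_take_le _ _)
  rw [List.getElem?_take_of_lt hid] at hx
  have hlen : (l.take d).length = d := by
    have := h.lt_length (i := 0) rfl
    simp only [List.length_take, List.length_cons] at this ⊢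
    omega
  have hlt : i + e + 1 < d := by have := (h.inside_head_arc hid).2 e hx; omega
  obtain ⟨hrow, hnest⟩ := h (i + 1) e hx
  refine ⟨?_, fun j hij hje => ?_⟩
  · rw [show i + 1 + e + 1 = i + e + 1 + 1 by omega, List.getElem?_cons_succ] at hrow
    rw [getElem?_openEnd, List.getElem?_take_of_lt hlt, hrow]
    rfl
  · obtain ⟨hfree, harc⟩ := hnest (j + 1) (by omega) (by omega)
    rw [List.getElem?_cons_succ] at hfree harc
    rw [getElem?_openEnd, List.getElem?_take_of_lt (by omega), hlen]
    constructor
    · rcases hy : l[j]? with _ | _ | _ | e'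
      · simp
      · simp [openAt]
      · exact absurd hy hfree
      · have := harc e' hy
        rw [Option.map_some, ne_eq, Option.some_inj, ← ne_eq, openAt, if_neg (by omega)]
        simp
    · intro e' he'
      obtain ⟨y, hy, hye⟩ := Option.map_eq_some_iff.1 he'
      obtain ⟨rfl, -⟩ := openAt_eq_arc.1 hye
      have := harc e' hy
      omega

theorem IsCode.closeFree_openEnd_take (h : IsCode (arc d :: l)) :
    closeFree (openEnd (l.take d)) = l.take d := by
  refine List.ext_getElem? fun j => ?_
  rw [getElem?_closeFree, getElem?_openEnd, Option.map_map]
  by_cases hj : j < d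
  · rw [List.getElem?_take_of_lt hj, show (openEnd (l.take d)).length = (l.take d).length from
      List.length_mapIdx]
    rcases hy : l[j]? with _ | _ | _ | e
    · rfl
    · rfl
    · exact absurd hy (h.inside_head_arc hj).1
    · simp only [Option.map_some, Function.comp_apply, openAt]
      split_ifs with he <;> simp [closeAt, he]
  · rw [List.getElem?_eq_none (by rw [List.length_take]; omega)]
    rfl

theorem IsCode.exists_eq_closeFree (h : IsCode (arc d :: l)) :
    ∃ w v, IsCode w ∧ IsCode v ∧ w.length = d ∧ l = closeFree w ++ row :: v := by
  have hrow : l[d]? = some row := by simpa using (h 0 d rfl).1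
  obtain ⟨hdl, hd⟩ := List.getElem?_eq_some_iff.1 hrow
  refine ⟨openEnd (l.take d), l.drop (d + 1), h.isCode_openEnd_take, by simpa using h.drop (d + 2),
    by rw [openEnd, List.length_mapIdx, List.length_take]; omega, ?_⟩
  rw [h.closeFree_openEnd_take, ← hd, ← List.drop_eq_getElem_cons hdl, List.take_append_drop]

end HeadArc

inductive CodeTree
  | nil
  | row (c : CodeTree)
  | free (c : CodeTree)
  | arc (inner rest : CodeTree)

namespace CodeTree

def size : CodeTree → ℕ
  | nil => 0
  | row c | free c => c.size + 1
  | arc c₁ c₂ => c₁.size + c₂.size + 2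

def decode : CodeTree → List Letter
  | nil => []
  | row c => .row :: c.decode
  | free c => .free :: c.decode
  | arc c₁ c₂ => .arc c₁.size :: (closeFree c₁.decode ++ .row :: c₂.decode)

theorem length_decode : ∀ c : CodeTree, c.decode.length = c.size
  | nil => rfl
  | row c | free c => by simp [decode, size, length_decode c]
  | arc c₁ c₂ => by
    simp only [decode, size, List.length_cons, List.length_append, length_closeFree,
      length_decode c₁, length_decode c₂]
    omega

theorem isCode_decode : ∀ c : CodeTree, IsCode c.decode
  | nil => by intro i d hi; simp [decode] at hi
  | row c => (isCode_singleton (by simp)).append (isCode_decode c)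
  | free c => (isCode_singleton (by simp)).append (isCode_decode c)
  | arc c₁ c₂ => by
    simpa [decode, ← length_decode c₁] using
      (isCode_decode c₁).arc_closeFree.append (isCode_decode c₂)

theorem decode_injective : Function.Injective decode := by
  intro c c' h
  induction c generalizing c' with
  | nil => cases c' <;> simp_all [decode]
  | row c ih =>
    cases c' with
    | row c' => exact congrArg row (ih (List.cons_injective h))
    | _ => simp [decode] at h
  | free c ih =>
    cases c' with
    | free c' => exact congrArg free (ih (List.cons_injective h))
    | _ => simp [decode] at h
  | arc c₁ c₂ ih₁ ih₂ =>
    cases c' with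
    | arc c₁' c₂' =>
      simp only [decode, List.cons.injEq, Letter.arc.injEq] at h
      obtain ⟨hsize, h⟩ := h
      obtain ⟨hinner, hrest⟩ := List.append_inj h (by simp [length_decode, hsize])
      have hinner : c₁.decode = c₁'.decode := by
        rw [← (isCode_decode c₁).openEnd_closeFree, hinner, (isCode_decode c₁').openEnd_closeFree]
      rw [ih₁ hinner, ih₂ (List.cons_injective hrest)]
    | _ => simp [decode] at h

theorem exists_decode_eq (l : List Letter) (hl : IsCode l) : ∃ c : CodeTree, c.decode = l := by
  induction hn : l.length using Nat.strong_induction_on generalizing l with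
  | _ n ih =>
  match l, hl with
  | [], _ => exact ⟨nil, rfl⟩
  | .row :: l, hl =>
    obtain ⟨c, hc⟩ := ih l.length (by simp [← hn]) l (by simpa using hl.drop 1) rfl
    exact ⟨row c, by rw [decode, hc]⟩
  | .free :: l, hl =>
    obtain ⟨c, hc⟩ := ih l.length (by simp [← hn]) l (by simpa using hl.drop 1) rfl
    exact ⟨free c, by rw [decode, hc]⟩
  | .arc d :: l, hl =>
    obtain ⟨w, v, hw, hv, rfl, rfl⟩ := hl.exists_eq_closeFree
    obtain ⟨c₁, rfl⟩ := ih w.length (by simp [← hn]) w hw rfl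
    obtain ⟨c₂, rfl⟩ := ih v.length (by simp [← hn]; omega) v hv rfl
    exact ⟨arc c₁ c₂, by rw [decode, length_decode]⟩

def toTree : CodeTree → BinaryTree Unit
  | nil => .node () .nil .nil
  | row c => .node () .nil c.toTree
  | free c => .node () c.toTree .nil
  | arc c₁ c₂ => .node () c₁.toTree c₂.toTree

theorem toTree_ne_nil (c : CodeTree) : c.toTree ≠ .nil := by
  cases c <;> simp [toTree]

theorem numNodes_toTree : ∀ c : CodeTree, c.toTree.numNodes = c.size + 1
  | nil => rfl
  | row c | free c => by simp [toTree, size, numNodes_toTree c]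
  | arc c₁ c₂ => by
    simp only [toTree, size, BinaryTree.numNodes, numNodes_toTree c₁, numNodes_toTree c₂]
    omega

theorem toTree_injective : Function.Injective toTree := by
  have nil_ne (c : CodeTree) : .nil ≠ c.toTree := (toTree_ne_nil c).symm
  intro c c' h
  induction c generalizing c' with
  | nil => cases c' <;> simp_all [toTree]
  | row c ih =>
    cases c' with
    | row c' => exact congrArg row (ih (by simpa [toTree] using h))
    | _ => simp_all [toTree, toTree_ne_nil]
  | free c ih =>
    cases c' with
    | free c' => exact congrArg free (ih (by simpa [toTree] using h))
    | _ => simp_all [toTree, toTree_ne_nil]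
  | arc c₁ c₂ ih₁ ih₂ =>
    cases c' with
    | arc c₁' c₂' =>
      simp only [toTree, BinaryTree.node.injEq, true_and] at h
      rw [ih₁ h.1, ih₂ h.2]
    | _ => simp_all [toTree, toTree_ne_nil]

theorem exists_toTree_eq : ∀ t : BinaryTree Unit, t ≠ .nil → ∃ c : CodeTree, c.toTree = t
  | .nil, h => absurd rfl h
  | .node () .nil .nil, _ => ⟨nil, rfl⟩
  | .node () .nil (.node () l r), _ => by
    obtain ⟨c, hc⟩ := exists_toTree_eq (.node () l r) (by simp)
    exact ⟨row c, by rw [toTree, hc]⟩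
  | .node () (.node () l r) .nil, _ => by
    obtain ⟨c, hc⟩ := exists_toTree_eq (.node () l r) (by simp)
    exact ⟨free c, by rw [toTree, hc]⟩
  | .node () (.node () l r) (.node () l' r'), _ => by
    obtain ⟨c₁, hc₁⟩ := exists_toTree_eq (.node () l r) (by simp)
    obtain ⟨c₂, hc₂⟩ := exists_toTree_eq (.node () l' r') (by simp)
    exact ⟨arc c₁ c₂, by rw [toTree, hc₁, hc₂]⟩

end CodeTree

theorem card_isCode (n : ℕ) :
    Nat.card {l : List Letter // IsCode l ∧ l.length = n} = catalan (n + 1) := by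
  have hdecode : Nat.card {c : CodeTree // c.size = n} =
      Nat.card {l : List Letter // IsCode l ∧ l.length = n} := by
    refine Nat.card_eq_of_bijective
      (fun c => ⟨c.1.decode, c.1.isCode_decode, by rw [CodeTree.length_decode, c.2]⟩) ⟨?_, ?_⟩
    · exact fun c c' h => Subtype.ext (CodeTree.decode_injective (congrArg Subtype.val h))
    · rintro ⟨l, hl, rfl⟩
      obtain ⟨c, rfl⟩ := CodeTree.exists_decode_eq l hl
      exact ⟨⟨c, c.length_decode.symm⟩, rfl⟩
  have htree : Nat.card {c : CodeTree // c.size = n} =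
      Nat.card {t : BinaryTree Unit // t.numNodes = n + 1} := by
    refine Nat.card_eq_of_bijective
      (fun c => ⟨c.1.toTree, by rw [CodeTree.numNodes_toTree, c.2]⟩) ⟨?_, ?_⟩
    · exact fun c c' h => Subtype.ext (CodeTree.toTree_injective (congrArg Subtype.val h))
    · rintro ⟨t, ht⟩
      obtain ⟨c, rfl⟩ := CodeTree.exists_toTree_eq t (by rintro rfl; simp at ht)
      exact ⟨⟨c, by simpa [CodeTree.numNodes_toTree] using ht⟩, rfl⟩
  rw [← hdecode, htree, ← BinaryTree.treesOfNumNodesEq_card_eq_catalan, ← Nat.card_eq_finsetCard]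
  simp only [BinaryTree.mem_treesOfNumNodesEq]

section OfRed

variable {n : ℕ} (shape : Fin n → Bool) (red : Fin n → Fin n → Prop)

def IsOpenCell (c r : Fin n) : Prop :=
  shape c = false ∧ shape r = true ∧ c < r ∧ ∀ r' ≤ r, ¬ red c r'

open Classical in
noncomputable def dotsOf (c r : Fin n) : Option Bool :=
  if red c r then some true
  else if IsOpenCell shape red c r ∧ ∀ c', IsOpenCell shape red c' r → c' ≤ c then some false
  else none

variable {shape red} {c r : Fin n}

theorem dotsOf_eq_red : dotsOf shape red c r = some true ↔ red c r := by
  unfold dotsOf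
  split_ifs with hred hblue <;> simp [hred]

theorem dotsOf_eq_blue :
    dotsOf shape red c r = some false ↔
      IsOpenCell shape red c r ∧ ∀ c', IsOpenCell shape red c' r → c' ≤ c := by
  unfold dotsOf
  split_ifs with hred hblue
  · simp only [Option.some.injEq, Bool.true_eq_false, false_iff, not_and]
    exact fun hopen => absurd hred (hopen.2.2.2 r le_rfl)
  · simpa using hblue
  · simpa using hblue

theorem dotsOf_eq_none : dotsOf shape red c r = none ↔
    ¬ red c r ∧ ¬ (IsOpenCell shape red c r ∧ ∀ c', IsOpenCell shape red c' r → c' ≤ c) := by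
  unfold dotsOf
  split_ifs <;> simp_all

theorem exists_isOpenCell_max (h : IsOpenCell shape red c r) :
    ∃ c₀, c ≤ c₀ ∧ IsOpenCell shape red c₀ r ∧ ∀ c', IsOpenCell shape red c' r → c' ≤ c₀ := by
  classical
  obtain ⟨c₀, hc₀, hmax⟩ :=
    (Finset.univ.filter (IsOpenCell shape red · r)).exists_max_image id ⟨c, by simpa using h⟩
  simp only [Finset.mem_filter, Finset.mem_univ, true_and, id] at hc₀ hmax
  exact ⟨c₀, hmax c h, hc₀, hmax⟩

noncomputable def CatAltTableau.ofRed
    (red_mem_cells : ∀ c r, red c r → shape c = false ∧ shape r = true ∧ c < r)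
    (red_unique : ∀ c r r', red c r → red c r' → r = r')
    (red_nested : ∀ c r c', red c r → c < c' → c' < r → shape c' = false → ∃ r' ≤ r, red c' r') :
    CatAltTableau n where
  shape := shape
  dots := dotsOf shape red
  dots_mem_cells c r h := by
    by_cases hred : red c r
    · exact red_mem_cells c r hred
    · have hopen : IsOpenCell shape red c r := by
        by_contra hopen
        exact h (dotsOf_eq_none.2 ⟨hred, fun hblue => hopen hblue.1⟩)
      exact ⟨hopen.1, hopen.2.1, hopen.2.2.1⟩
  no_dot_below_red c r r' h hrr' := by
    rw [dotsOf_eq_red] at h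
    refine dotsOf_eq_none.2 ⟨fun h' => ?_, fun ⟨hopen, _⟩ => hopen.2.2.2 r hrr'.le h⟩
    exact hrr'.ne (red_unique c r r' h h')
  no_dot_left_of_blue c r c' h hc'c := by
    obtain ⟨hopen, hmax⟩ := dotsOf_eq_blue.1 h
    refine dotsOf_eq_none.2 ⟨fun h' => ?_, fun ⟨_, hmax'⟩ => (hmax' c hopen).not_gt hc'c⟩
    obtain ⟨r', hr'r, hred⟩ := red_nested c' r c h' hc'c hopen.2.2.1 hopen.1
    exact hopen.2.2.2 r' hr'r hred
  cover c r hc hr hcr := by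
    by_cases hred : ∃ r₀ ≤ r, red c r₀
    · obtain ⟨r₀, hr₀, hred⟩ := hred
      exact Or.inl ⟨r₀, hr₀, dotsOf_eq_red.2 hred⟩
    · simp only [not_exists, not_and] at hred
      obtain ⟨c₀, hcc₀, hopen, hmax⟩ := exists_isOpenCell_max ⟨hc, hr, hcr, hred⟩
      exact Or.inr ⟨c₀, hcc₀, dotsOf_eq_blue.2 ⟨hopen, hmax⟩⟩

theorem CatAltTableau.ofRed_dots_eq_red {h₁ h₂ h₃} :
    (CatAltTableau.ofRed (shape := shape) (red := red) h₁ h₂ h₃).dots c r = some true ↔ red c r :=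
  dotsOf_eq_red

end OfRed

namespace CatAltTableau

variable {n : ℕ} (t : CatAltTableau n)

abbrev IsRed (c r : Fin n) : Prop := t.dots c r = some true

open Classical in
noncomputable def letter (c : Fin n) : Letter :=
  if t.shape c then .row
  else if h : ∃ r, t.IsRed c r then .arc (h.choose - c - 1) else .free

noncomputable def encode : List Letter := List.ofFn t.letter

variable {t} {c r : Fin n}

theorem IsRed.mem_cells (h : t.IsRed c r) : t.shape c = false ∧ t.shape r = true ∧ c < r :=
  t.dots_mem_cells c r (by rw [show t.dots c r = some true from h]; simp)

theorem red_unique {r' : Fin n} (h : t.IsRed c r) (h' : t.IsRed c r') : r = r' := by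
  by_contra hne
  rcases lt_or_gt_of_ne hne with hlt | hlt
  · exact Option.some_ne_none true (h'.symm.trans (t.no_dot_below_red c r r' h hlt))
  · exact Option.some_ne_none true (h.symm.trans (t.no_dot_below_red c r' r h' hlt))

theorem exists_isRed_of_isRed_left {j : Fin n} (hred : t.IsRed c r) (hcj : c < j) (hjr : j < r)
    (hj : t.shape j = false) : ∃ r₀ ≤ r, t.IsRed j r₀ := by
  refine (t.cover j r hj hred.mem_cells.2.1 hjr).resolve_right ?_
  rintro ⟨c₀, hjc₀, hblue⟩
  exact Option.some_ne_none true (hred.symm.trans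
    (t.no_dot_left_of_blue c₀ r c hblue (hcj.trans_le hjc₀)))

theorem dots_eq_blue_iff :
    t.dots c r = some false ↔
      IsOpenCell t.shape t.IsRed c r ∧ ∀ c', IsOpenCell t.shape t.IsRed c' r → c' ≤ c := by
  have isOpenCell_of_blue {c : Fin n} (h : t.dots c r = some false) :
      IsOpenCell t.shape t.IsRed c r := by
    obtain ⟨hc, hr, hcr⟩ := t.dots_mem_cells c r (by simp [h])
    refine ⟨hc, hr, hcr, fun r' hr' hred => ?_⟩
    rcases hr'.lt_or_eq with hlt | rfl
    · exact Option.some_ne_none false (h.symm.trans (t.no_dot_below_red c r' r hred hlt))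
    · exact absurd (h.symm.trans hred) (by simp)
  constructor
  · intro h
    refine ⟨isOpenCell_of_blue h, fun c' hopen => le_of_not_gt fun hcc' => ?_⟩
    obtain ⟨hc', hr, hc'r, hnred⟩ := hopen
    rcases t.cover c' r hc' hr hc'r with ⟨r₀, hr₀, hred⟩ | ⟨c₀, hc'c₀, hblue⟩
    · exact hnred r₀ hr₀ hred
    · exact Option.some_ne_none false
        (h.symm.trans (t.no_dot_left_of_blue c₀ r c hblue (hcc'.trans_le hc'c₀)))
  · rintro ⟨⟨hc, hr, hcr, hnred⟩, hmax⟩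
    rcases t.cover c r hc hr hcr with ⟨r₀, hr₀, hred⟩ | ⟨c₀, hcc₀, hblue⟩
    · exact absurd hred (hnred r₀ hr₀)
    · rwa [le_antisymm (hmax c₀ (isOpenCell_of_blue hblue)) hcc₀] at hblue

theorem dots_eq_dotsOf (t : CatAltTableau n) : t.dots = dotsOf t.shape t.IsRed := by
  funext c r
  apply Option.ext
  rintro (_ | _)
  · rw [dots_eq_blue_iff, dotsOf_eq_blue]
  · rw [dotsOf_eq_red]

theorem ext_of_isRed {s : CatAltTableau n} (hshape : t.shape = s.shape)
    (hred : ∀ c r, t.IsRed c r ↔ s.IsRed c r) : t = s := by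
  have hdots : t.dots = s.dots := by
    have hred' : t.IsRed = s.IsRed := funext₂ fun c r => propext (hred c r)
    rw [dots_eq_dotsOf, dots_eq_dotsOf, hshape, hred']
  cases t
  cases s
  cases hshape
  cases hdots
  rfl

@[simp]
theorem length_encode : t.encode.length = n := List.length_ofFn

theorem getElem?_encode (c : Fin n) : t.encode[(c : ℕ)]? = some (t.letter c) := by
  simp [encode]

theorem letter_eq_row : t.letter c = .row ↔ t.shape c = true := by
  unfold letter
  split_ifs with hs <;> simp [hs]

theorem letter_eq_free : t.letter c = .free ↔ t.shape c = false ∧ ∀ r, ¬ t.IsRed c r := by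
  unfold letter
  split_ifs with hs hred <;> simp_all

theorem letter_eq_arc {d : ℕ} : t.letter c = .arc d ↔ ∃ r, t.IsRed c r ∧ (r : ℕ) = c + d + 1 := by
  constructor
  · intro h
    unfold letter at h
    split_ifs at h with hs hred
    obtain rfl := Letter.arc.inj h
    have hcr := Fin.lt_def.1 hred.choose_spec.mem_cells.2.2
    exact ⟨_, hred.choose_spec, by omega⟩
  · rintro ⟨r, hred, hr⟩
    have hex : ∃ r, t.IsRed c r := ⟨r, hred⟩
    unfold letter
    rw [if_neg (by simp [hred.mem_cells.1]), dif_pos hex, red_unique hex.choose_spec hred]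
    congr 1
    omega

theorem isRed_iff_letter : t.IsRed c r ↔ c < r ∧ t.letter c = .arc (r - c - 1) := by
  constructor
  · intro h
    have hcr := h.mem_cells.2.2
    exact ⟨hcr, letter_eq_arc.2 ⟨r, h, by rw [Fin.lt_def] at hcr; omega⟩⟩
  · rintro ⟨hcr, h⟩
    obtain ⟨r', hred, hr'⟩ := letter_eq_arc.1 h
    rw [Fin.lt_def] at hcr
    rwa [show r' = r from Fin.ext (by omega)] at hred

theorem isCode_encode (t : CatAltTableau n) : IsCode t.encode := by
  intro i d hi
  obtain ⟨c, rfl⟩ : ∃ c : Fin n, (c : ℕ) = i :=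
    ⟨⟨i, by simpa using (List.getElem?_eq_some_iff.1 hi).1⟩, rfl⟩
  rw [getElem?_encode, Option.some_inj, letter_eq_arc] at hi
  obtain ⟨r, hred, hr⟩ := hi
  refine ⟨by rw [← hr, getElem?_encode, letter_eq_row.2 hred.mem_cells.2.1], fun j hcj hjd => ?_⟩
  obtain ⟨j, rfl⟩ : ∃ j' : Fin n, (j' : ℕ) = j := ⟨⟨j, by omega⟩, rfl⟩
  rw [getElem?_encode, ne_eq, Option.some_inj]
  by_cases hs : t.shape j
  · simp [letter_eq_row.2 hs]
  · obtain ⟨r₀, hr₀, hred₀⟩ := exists_isRed_of_isRed_left hred (Fin.lt_def.2 hcj)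
      (Fin.lt_def.2 (by omega)) (by simpa using hs)
    have hj₀ := Fin.lt_def.1 hred₀.mem_cells.2.2
    rw [Fin.le_def] at hr₀
    rw [(isRed_iff_letter.1 hred₀).2]
    simp only [reduceCtorEq, not_false_eq_true, Option.some_inj, Letter.arc.injEq, true_and]
    omega

theorem encode_injective : Function.Injective (encode : CatAltTableau n → List Letter) := by
  intro t s h
  have hletter : t.letter = s.letter := List.ofFn_injective h
  refine ext_of_isRed ?_ fun c r => ?_
  · funext c
    apply Bool.eq_iff_iff.2
    rw [← letter_eq_row, ← letter_eq_row, hletter]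
  · rw [isRed_iff_letter, isRed_iff_letter, hletter]

open Classical in
noncomputable def ofCode (l : List Letter) (hl : IsCode l) : CatAltTableau n :=
  ofRed (shape := fun c => decide (l[(c : ℕ)]? = some .row))
    (red := fun c r => c < r ∧ l[(c : ℕ)]? = some (.arc (r - c - 1)))
    (fun c r ⟨hcr, hc⟩ => by
      have hrow := hl.row_of_arc (Fin.lt_def.1 hcr) hc
      simp [hc, hrow, hcr])
    (fun c r r' ⟨hcr, hc⟩ ⟨hcr', hc'⟩ => by
      rw [hc, Option.some_inj, Letter.arc.injEq] at hc'
      rw [Fin.lt_def] at hcr hcr'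
      exact Fin.ext (by omega))
    (fun c r c' ⟨hcr, hc⟩ hcc' hc'r hc' => by
      obtain ⟨r', hr'r, hc'r', hr'⟩ := hl.exists_arc_of_lt_arc (Fin.lt_def.1 hcr) hc hcc' hc'r
        (by simpa using hc')
      exact ⟨⟨r', by omega⟩, Fin.le_def.2 hr'r, Fin.lt_def.2 hc'r', hr'⟩)

section OfCode

variable {l : List Letter} (hl : IsCode l)

theorem shape_ofCode : (ofCode l hl).shape c = true ↔ l[(c : ℕ)]? = some .row := by
  classical
  exact decide_eq_true_iff

theorem isRed_ofCode : (ofCode l hl).IsRed c r ↔ c < r ∧ l[(c : ℕ)]? = some (.arc (r - c - 1)) :=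
  ofRed_dots_eq_red

theorem encode_ofCode (hn : l.length = n) : (ofCode l hl : CatAltTableau n).encode = l := by
  refine List.ext_getElem? fun i => ?_
  by_cases hin : i < n
  · obtain ⟨c, rfl⟩ : ∃ c : Fin n, (c : ℕ) = i := ⟨⟨i, hin⟩, rfl⟩
    rw [getElem?_encode]
    rcases hx : l[(c : ℕ)]? with _ | _ | _ | d
    · rw [List.getElem?_eq_none_iff] at hx
      omega
    · rw [letter_eq_row.2 ((shape_ofCode hl).2 hx)]
    · rw [letter_eq_free.2 ⟨by simpa [hx] using (shape_ofCode hl (c := c)).not, fun r hred => ?_⟩]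
      simp [isRed_ofCode, hx] at hred
    · have hr := hl.lt_length hx
      have hred : (ofCode l hl).IsRed c ⟨c + d + 1, by omega⟩ :=
        (isRed_ofCode hl).2 ⟨Fin.lt_def.2 (by simp), by rw [hx, Fin.val_mk]; congr 2; omega⟩
      rw [(isRed_iff_letter.1 hred).2]
      simp only [Option.some_inj, Letter.arc.injEq]
      omega
  · rw [List.getElem?_eq_none (by simpa using hin), List.getElem?_eq_none (by omega)]

end OfCode

theorem card_eq_catalan (n : ℕ) : Nat.card (CatAltTableau n) = catalan (n + 1) := by
  rw [← card_isCode n]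
  refine Nat.card_eq_of_bijective (fun t => ⟨t.encode, t.isCode_encode, length_encode⟩)
    ⟨fun t s h => encode_injective (congrArg Subtype.val h), ?_⟩
  rintro ⟨l, hl, hn⟩
  exact ⟨ofCode l hl, Subtype.ext (encode_ofCode hl hn)⟩

end CatAltTableau

/-- The number of Catalan alternative tableaux of size `n` is the Catalan number
`C_{n+1} = (1/(n+2)) * (2n+2).choose (n+1)` (stated multiplicatively). -/
theorem card_catAltTableau (n : ℕ) :
    (n + 2) * Nat.card (CatAltTableau n) = (2 * n + 2).choose (n + 1) := by
  rw [CatAltTableau.card_eq_catalan, succ_mul_catalan_eq_centralBinom,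
    Nat.centralBinom_eq_two_mul_choose, Nat.mul_succ]
end

section
/- There is an explicit bijection between Catalan alternative tableaux of size n−1 and planar binary trees with n internal vertices. -/
/-- `CatAltTableau n` with its steps indexed by `ℕ`: the steps from `n` on are vertical and carry
no dots, so that each tableau has exactly one representative. -/
@[ext] structure NatTableau (n : ℕ) where
  shape : ℕ → Bool
  dots : ℕ → ℕ → Option Bool
  shape_of_le : ∀ s, n ≤ s → shape s = true
  dots_mem_cells :
    ∀ c r, dots c r ≠ none → shape c = false ∧ shape r = true ∧ c < r ∧ r < n
  no_dot_below_red : ∀ c r r', dots c r = some true → r < r' → dots c r' = none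
  no_dot_left_of_blue : ∀ c r c', dots c r = some false → c' < c → dots c' r = none
  cover : ∀ c r, shape c = false → shape r = true → c < r → r < n →
    (∃ r₀, r₀ ≤ r ∧ dots c r₀ = some true) ∨ (∃ c₀, c ≤ c₀ ∧ dots c₀ r = some false)

namespace NatTableau

variable {n m j k : ℕ}

theorem mem_cells_of_dots_eq_some {t : NatTableau n} {c r : ℕ} {b : Bool}
    (h : t.dots c r = some b) : t.shape c = false ∧ t.shape r = true ∧ c < r ∧ r < n :=
  t.dots_mem_cells c r (by simp [h])

theorem dots_eq_none_of_size_le {t : NatTableau n} {c r : ℕ} (h : n ≤ r) :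
    t.dots c r = none := by
  by_contra h'
  have := (t.dots_mem_cells c r h').2.2.2
  omega

theorem dots_eq_none_of_le {t : NatTableau n} {c r : ℕ} (h : r ≤ c) : t.dots c r = none := by
  by_contra h'
  have := (t.dots_mem_cells c r h').2.2.1
  omega

theorem red_row_unique {t : NatTableau n} {c r r' : ℕ} (h : t.dots c r = some true)
    (h' : t.dots c r' = some true) : r = r' := by
  by_contra hne
  rcases Nat.lt_or_gt_of_ne hne with hlt | hlt
  · simp [t.no_dot_below_red c r r' h hlt] at h'
  · simp [t.no_dot_below_red c r' r h' hlt] at h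

@[simps]
def ofCatAltTableau (t : CatAltTableau n) : NatTableau n where
  shape s := if h : s < n then t.shape ⟨s, h⟩ else true
  dots c r := if h : c < n ∧ r < n then t.dots ⟨c, h.1⟩ ⟨r, h.2⟩ else none
  shape_of_le s hs := dif_neg (by omega)
  dots_mem_cells c r hd := by
    by_cases h : c < n ∧ r < n
    · rw [dif_pos h] at hd
      obtain ⟨h1, h2, h3⟩ := t.dots_mem_cells _ _ hd
      simp only [dif_pos h.1, dif_pos h.2]
      exact ⟨h1, h2, h3, h.2⟩
    · exact absurd (dif_neg h) hd
  no_dot_below_red c r r' hd hlt := by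
    by_cases h : c < n ∧ r < n
    · rw [dif_pos h] at hd
      by_cases h' : c < n ∧ r' < n
      · rw [dif_pos h']
        exact t.no_dot_below_red _ _ _ hd hlt
      · exact dif_neg h'
    · simp [dif_neg h] at hd
  no_dot_left_of_blue c r c' hd hlt := by
    by_cases h : c < n ∧ r < n
    · rw [dif_pos h] at hd
      rw [dif_pos ⟨hlt.trans h.1, h.2⟩]
      exact t.no_dot_left_of_blue _ _ _ hd hlt
    · simp [dif_neg h] at hd
  cover c r hc hr hcr hrn := by
    have hcn : c < n := hcr.trans hrn
    simp only [dif_pos hcn, dif_pos hrn] at hc hr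
    rcases t.cover ⟨c, hcn⟩ ⟨r, hrn⟩ hc hr hcr with ⟨r₀, h₀, h⟩ | ⟨c₀, h₀, h⟩
    · exact .inl ⟨r₀, h₀, by simpa [hcn, r₀.isLt]⟩
    · exact .inr ⟨c₀, h₀, by simpa [hrn, c₀.isLt]⟩

@[simps]
def toCatAltTableau (t : NatTableau n) : CatAltTableau n where
  shape s := t.shape s
  dots c r := t.dots c r
  dots_mem_cells c r h := by
    obtain ⟨h1, h2, h3, -⟩ := t.dots_mem_cells c r h
    exact ⟨h1, h2, h3⟩
  no_dot_below_red c r r' h hr := t.no_dot_below_red c r r' h hr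
  no_dot_left_of_blue c r c' h hc := t.no_dot_left_of_blue c r c' h hc
  cover c r hc hr hcr := by
    rcases t.cover c r hc hr hcr r.isLt with ⟨r₀, h₀, h⟩ | ⟨c₀, h₀, h⟩
    · exact .inl ⟨⟨r₀, by omega⟩, h₀, h⟩
    · have := mem_cells_of_dots_eq_some h
      exact .inr ⟨⟨c₀, by omega⟩, h₀, h⟩

def equivCatAltTableau : NatTableau n ≃ CatAltTableau n where
  toFun := toCatAltTableau
  invFun := ofCatAltTableau
  left_inv t := by
    apply NatTableau.ext
    · funext s
      by_cases h : s < n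
      · simp [h]
      · simp [h, t.shape_of_le s (by omega)]
    · funext c r
      by_cases h : c < n ∧ r < n
      · simp [h]
      · rw [ofCatAltTableau_dots, dif_neg h]
        by_cases hr : r < n
        · exact (dots_eq_none_of_le (by omega)).symm
        · exact (dots_eq_none_of_size_le (by omega)).symm
  right_inv t := by
    cases t
    simp only [toCatAltTableau, ofCatAltTableau, CatAltTableau.mk.injEq]
    simp

instance : Finite (CatAltTableau n) :=
  Finite.of_injective (fun t => (t.shape, t.dots)) fun t u h => by
    cases t; cases u; simp_all

instance : Finite (NatTableau n) := Finite.of_equiv _ equivCatAltTableau.symm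

def vertical (n : ℕ) : NatTableau n where
  shape _ := true
  dots _ _ := none
  shape_of_le _ _ := rfl
  dots_mem_cells _ _ h := absurd rfl h
  no_dot_below_red _ _ _ h := by simp at h
  no_dot_left_of_blue _ _ _ h := by simp at h
  cover _ _ h := by simp at h

theorem eq_vertical (t : NatTableau n) (h : ∀ s, t.shape s = true) : t = vertical n := by
  apply NatTableau.ext
  · funext s; exact h s
  · funext c r
    by_contra hd
    simpa [h c] using (t.dots_mem_cells c r hd).1

@[simps]
def take (j : ℕ) (t : NatTableau (j + k)) : NatTableau j where
  shape s := if s < j then t.shape s else true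
  dots c r := if r < j then t.dots c r else none
  shape_of_le s hs := if_neg (by omega)
  dots_mem_cells c r h := by
    split_ifs at h with hr
    · have := t.dots_mem_cells c r h
      grind
    · simp at h
  no_dot_below_red c r r' h hr := by
    grind [t.no_dot_below_red c r r']
  no_dot_left_of_blue c r c' h hc := by
    grind [t.no_dot_left_of_blue c r c']
  cover c r hc hr hcr hrj := by
    simp only [show r < j from hrj, show c < j by omega, if_true] at hc hr ⊢
    rcases t.cover c r hc hr hcr (by omega) with ⟨r₀, h₀, h⟩ | ⟨c₀, h₀, h⟩
    · exact .inl ⟨r₀, h₀, by rw [if_pos (by omega)]; exact h⟩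
    · exact .inr ⟨c₀, h₀, h⟩

@[simps]
def drop (j : ℕ) (t : NatTableau (j + k)) : NatTableau k where
  shape s := t.shape (j + s)
  dots c r := t.dots (j + c) (j + r)
  shape_of_le s hs := t.shape_of_le _ (by omega)
  dots_mem_cells c r h := by
    have := t.dots_mem_cells _ _ h
    exact ⟨this.1, this.2.1, by omega, by omega⟩
  no_dot_below_red c r r' h hr := t.no_dot_below_red _ _ _ h (by omega)
  no_dot_left_of_blue c r c' h hc := t.no_dot_left_of_blue _ _ _ h (by omega)
  cover c r hc hr hcr hrk := by
    rcases t.cover _ _ hc hr (by omega) (by omega) with ⟨r₀, h₀, h⟩ | ⟨c₀, h₀, h⟩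
    · have := mem_cells_of_dots_eq_some h
      exact .inl ⟨r₀ - j, by omega, by rwa [Nat.add_sub_cancel' (by omega)]⟩
    · exact .inr ⟨c₀ - j, by omega, by rwa [Nat.add_sub_cancel' (by omega)]⟩

def EveryColumnHasRed (t : NatTableau n) : Prop :=
  ∀ c, t.shape c = false → ∃ r, t.dots c r = some true

/-- The cells in a column of `P` and a row of `R` lie below a red dot of `P`, so they stay empty. -/
@[simps]
def concat (P : NatTableau j) (hP : P.EveryColumnHasRed) (R : NatTableau k) :
    NatTableau (j + k) where
  shape s := if s < j then P.shape s else R.shape (s - j)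
  dots c r := if r < j then P.dots c r else if j ≤ c then R.dots (c - j) (r - j) else none
  shape_of_le s hs := by
    simp only [if_neg (show ¬ s < j by omega), R.shape_of_le (s - j) (by omega)]
  dots_mem_cells c r h := by
    split_ifs at h with hr hc
    · have := P.dots_mem_cells c r h
      grind
    · have := R.dots_mem_cells _ _ h
      grind
    · simp at h
  no_dot_below_red c r r' h hr := by
    split_ifs at h with h1 h2
    · have := mem_cells_of_dots_eq_some h
      grind [P.no_dot_below_red c r r']
    · rw [if_neg (by omega), if_pos h2]
      exact R.no_dot_below_red _ _ _ h (by omega)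
  no_dot_left_of_blue c r c' h hc := by
    split_ifs at h with h1 h2
    · grind [P.no_dot_left_of_blue c r c']
    · rw [if_neg h1]
      split_ifs with h3
      · exact R.no_dot_left_of_blue _ _ _ h (by omega)
      · rfl
  cover c r hc hr hcr hrn := by
    by_cases hrj : r < j
    · simp only [if_pos hrj, if_pos (show c < j by omega)] at hc hr ⊢
      rcases P.cover c r hc hr hcr hrj with ⟨r₀, h₀, h⟩ | ⟨c₀, h₀, h⟩
      · exact .inl ⟨r₀, h₀, by rwa [if_pos (by omega)]⟩
      · exact .inr ⟨c₀, h₀, h⟩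
    by_cases hcj : c < j
    · simp only [if_pos hcj] at hc
      obtain ⟨r₀, h⟩ := hP c hc
      have := mem_cells_of_dots_eq_some h
      exact .inl ⟨r₀, by omega, by rwa [if_pos (by omega)]⟩
    · simp only [if_neg hrj, if_neg hcj] at hc hr ⊢
      rcases R.cover (c - j) (r - j) hc hr (by omega) (by omega) with
        ⟨r₀, h₀, h⟩ | ⟨c₀, h₀, h⟩
      · have := mem_cells_of_dots_eq_some h
        refine .inl ⟨r₀ + j, by omega, ?_⟩
        simpa [if_neg (show ¬ r₀ + j < j by omega), show j ≤ c by omega]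
      · have := mem_cells_of_dots_eq_some h
        exact .inr ⟨c₀ + j, by omega, by simpa [if_neg hrj]⟩

@[simp]
theorem take_concat (P : NatTableau j) (hP : P.EveryColumnHasRed) (R : NatTableau k) :
    (P.concat hP R).take j = P := by
  apply NatTableau.ext
  · funext s
    simp only [take_shape, concat_shape]
    split_ifs with h
    · rfl
    · exact (P.shape_of_le s (by omega)).symm
  · funext c r
    simp only [take_dots, concat_dots]
    split_ifs with h
    · rfl
    · exact (dots_eq_none_of_size_le (by omega)).symm

@[simp]
theorem drop_concat (P : NatTableau j) (hP : P.EveryColumnHasRed) (R : NatTableau k) :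
    (P.concat hP R).drop j = R := by
  apply NatTableau.ext <;> simp [drop, concat]

theorem concat_take_drop (t : NatTableau (j + k)) (h : (t.take j).EveryColumnHasRed) :
    (t.take j).concat h (t.drop j) = t := by
  apply NatTableau.ext
  · funext s
    simp only [take_shape, concat_shape, drop_shape]
    split_ifs <;> first | rfl | (congr 1; omega)
  · funext c r
    simp only [take_dots, concat_dots, drop_dots]
    split_ifs with hr hc
    · rfl
    · congr 1 <;> omega
    · symm
      by_contra hd
      obtain ⟨hsc, -, hcr, -⟩ := t.dots_mem_cells c r hd
      obtain ⟨r₀, hr₀⟩ := h c (by rwa [take_shape, if_pos (by omega)])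
      rw [take_dots] at hr₀
      split_ifs at hr₀ with h₀
      exact hd (t.no_dot_below_red c r₀ r hr₀ (by omega))

def concatEquiv (p : NatTableau j → Prop) (hp : ∀ P, p P → P.EveryColumnHasRed) :
    {t : NatTableau (j + k) // p (t.take j)} ≃ {P // p P} × NatTableau k where
  toFun t := (⟨t.1.take j, t.2⟩, t.1.drop j)
  invFun x := ⟨x.1.1.concat (hp _ x.1.2) x.2, by simpa using x.1.2⟩
  left_inv t := Subtype.ext (concat_take_drop t.1 (hp _ t.2))
  right_inv x := by ext <;> simp

def RedFreeColumn (t : NatTableau n) (c : ℕ) : Prop :=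
  c < n ∧ t.shape c = false ∧ ∀ r < n, t.dots c r ≠ some true

instance (t : NatTableau n) : DecidablePred t.RedFreeColumn := fun _ => by
  unfold RedFreeColumn; infer_instance

def BlueFreeRow (u : NatTableau n) (r : ℕ) : Prop :=
  r < n ∧ u.shape r = true ∧ ∀ c < r, u.dots c r ≠ some false

instance (u : NatTableau n) : DecidablePred u.BlueFreeRow := fun _ => by
  unfold BlueFreeRow; infer_instance

@[simps]
def consColumn (u : NatTableau n) : NatTableau (1 + n) where
  shape s := if s = 0 then false else u.shape (s - 1)
  dots c r :=
    if c = 0 then (if r ≠ 0 ∧ u.BlueFreeRow (r - 1) then some false else none)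
    else if r = 0 then none else u.dots (c - 1) (r - 1)
  shape_of_le s hs := by
    simp only [if_neg (show s ≠ 0 by omega), u.shape_of_le (s - 1) (by omega)]
  dots_mem_cells c r h := by
    by_cases hc : c = 0
    · simp only [hc, if_true, ne_eq, ite_eq_right_iff, reduceCtorEq, imp_false, not_not] at h ⊢
      obtain ⟨hr0, hrn, hr, -⟩ := h
      simp only [hr0, hr, if_false, true_and]
      omega
    · simp only [if_neg hc] at h ⊢
      split_ifs at h with hr
      · simp at h
      · obtain ⟨h1, h2, h3, h4⟩ := u.dots_mem_cells _ _ h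
        simp only [hr, h1, h2, if_false, true_and]
        omega
  no_dot_below_red c r r' h hr := by
    by_cases hc : c = 0
    · simp only [hc, if_true] at h
      split_ifs at h
      simp at h
    · simp only [if_neg hc] at h ⊢
      split_ifs at h with hr0
      rw [if_neg (by omega)]
      exact u.no_dot_below_red _ _ _ h (by omega)
  no_dot_left_of_blue c r c' h hc := by
    have hc0 : c ≠ 0 := by omega
    simp only [if_neg hc0] at h
    split_ifs at h with hr0
    have := mem_cells_of_dots_eq_some h
    split_ifs with hc'0 hfree'
    · exact absurd h (hfree'.2.2.2 (c - 1) (by omega))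
    · rfl
    · exact u.no_dot_left_of_blue _ _ _ h (by omega)
  cover c r hc hr hcr hrn := by
    have hr0 : r ≠ 0 := by omega
    simp only [if_neg hr0] at hr
    by_cases hc0 : c = 0
    · by_cases hfree : ∀ c' < r - 1, u.dots c' (r - 1) ≠ some false
      · refine .inr ⟨0, hc0.le, ?_⟩
        rw [if_pos rfl, if_pos ⟨hr0, by omega, hr, hfree⟩]
      · push Not at hfree
        obtain ⟨c', -, h⟩ := hfree
        exact .inr ⟨c' + 1, by omega, by simpa [hr0] using h⟩
    · simp only [if_neg hc0] at hc
      rcases u.cover (c - 1) (r - 1) hc hr (by omega) (by omega) with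
        ⟨r₀, h₀, h⟩ | ⟨c₀, h₀, h⟩
      · have := mem_cells_of_dots_eq_some h
        exact .inl ⟨r₀ + 1, by omega, by simpa [hc0] using h⟩
      · exact .inr ⟨c₀ + 1, by omega, by simpa [hr0] using h⟩

@[simp]
theorem drop_consColumn (u : NatTableau n) : u.consColumn.drop 1 = u := by
  apply NatTableau.ext <;> simp [drop, consColumn]

theorem redFreeColumn_consColumn (u : NatTableau n) : u.consColumn.RedFreeColumn 0 := by
  refine ⟨by omega, rfl, fun r _ => ?_⟩
  simp only [consColumn_dots, if_true]
  split_ifs <;> simp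

theorem dots_zero_eq_blue_iff {t : NatTableau (1 + n)} (h0 : t.RedFreeColumn 0) {r : ℕ}
    (hr : r ≠ 0) : t.dots 0 r = some false ↔ (t.drop 1).BlueFreeRow (r - 1) := by
  simp only [BlueFreeRow, drop_shape, drop_dots,
    Nat.add_sub_cancel' (Nat.one_le_iff_ne_zero.mpr hr)]
  constructor
  · intro h
    obtain ⟨-, hsr, -, hrn⟩ := mem_cells_of_dots_eq_some h
    refine ⟨by omega, hsr, fun c _ hc => ?_⟩
    simp [t.no_dot_left_of_blue _ _ 0 hc (by omega)] at h
  · rintro ⟨hrn, hsr, hnb⟩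
    rcases t.cover 0 r h0.2.1 hsr (by omega) (by omega) with ⟨r₀, h₀, h⟩ | ⟨c₀, -, h⟩
    · exact absurd h (h0.2.2 r₀ (by omega))
    · obtain ⟨-, -, hc₀, -⟩ := mem_cells_of_dots_eq_some h
      rcases Nat.eq_zero_or_pos c₀ with rfl | hc₀0
      · exact h
      · refine absurd ?_ (hnb (c₀ - 1) (by omega))
        rwa [Nat.add_sub_cancel' (by omega)]

theorem consColumn_drop (t : NatTableau (1 + n)) (h0 : t.RedFreeColumn 0) :
    (t.drop 1).consColumn = t := by
  apply NatTableau.ext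
  · funext s
    simp only [consColumn_shape, drop_shape]
    split_ifs with hs
    · rw [hs, h0.2.1]
    · congr 1; omega
  · funext c r
    simp only [consColumn_dots, drop_dots]
    by_cases hr : r = 0
    · simp [hr, dots_eq_none_of_le]
    by_cases hc : c = 0
    · subst hc
      have hblue := dots_zero_eq_blue_iff h0 hr
      rw [if_pos rfl]
      split_ifs with hfree
      · exact (hblue.mpr hfree.2).symm
      · cases h : t.dots 0 r with
        | none => rfl
        | some b =>
          cases b
          · exact absurd (hblue.mp h) fun h' => hfree ⟨hr, h'⟩
          · exact absurd h (h0.2.2 r (mem_cells_of_dots_eq_some h).2.2.2)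
    · rw [if_neg hc, if_neg hr]
      congr 1 <;> omega

def consColumnEquiv : NatTableau n ≃ {t : NatTableau (1 + n) // t.RedFreeColumn 0} where
  toFun u := ⟨u.consColumn, u.redFreeColumn_consColumn⟩
  invFun t := t.1.drop 1
  left_inv u := u.drop_consColumn
  right_inv t := Subtype.ext (consColumn_drop t.1 t.2)

@[simps]
def snocRow (X : NatTableau m) : NatTableau (m + 1) where
  shape := X.shape
  dots c r := if r = m then (if X.RedFreeColumn c then some true else none) else X.dots c r
  shape_of_le s hs := X.shape_of_le s (by omega)
  dots_mem_cells c r h := by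
    split_ifs at h with hr hfree
    · exact ⟨hfree.2.1, hr ▸ X.shape_of_le m le_rfl, hr ▸ hfree.1, by omega⟩
    · simp at h
    · have := X.dots_mem_cells c r h
      exact ⟨this.1, this.2.1, this.2.2.1, by omega⟩
  no_dot_below_red c r r' h hr := by
    split_ifs at h with hrm hfree
    · rw [if_neg (by omega)]
      exact dots_eq_none_of_size_le (by omega)
    · have := mem_cells_of_dots_eq_some h
      split_ifs with hr'm hfree'
      · exact absurd h (hfree'.2.2 r (by omega))
      · rfl
      · exact X.no_dot_below_red c r r' h hr
  no_dot_left_of_blue c r c' h hc := by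
    split_ifs at h with hrm hfree
    · simp at h
    · rw [if_neg hrm]
      exact X.no_dot_left_of_blue c r c' h hc
  cover c r hc hr hcr hrn := by
    by_cases hrm : r = m
    · subst hrm
      by_cases hfree : X.RedFreeColumn c
      · exact .inl ⟨r, le_rfl, by simp [hfree]⟩
      · obtain ⟨r₀, hr₀, h⟩ : ∃ r₀ < r, X.dots c r₀ = some true := by
          unfold RedFreeColumn at hfree
          push Not at hfree
          exact hfree hcr hc
        exact .inl ⟨r₀, hr₀.le, by simpa [hr₀.ne] using h⟩
    · rcases X.cover c r hc hr hcr (by omega) with ⟨r₀, h₀, h⟩ | ⟨c₀, h₀, h⟩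
      · exact .inl ⟨r₀, h₀, by simpa [show r₀ ≠ m by omega] using h⟩
      · exact .inr ⟨c₀, h₀, by simpa [hrm] using h⟩

@[simp]
theorem take_snocRow (X : NatTableau m) : X.snocRow.take m = X := by
  apply NatTableau.ext
  · funext s
    simp only [take_shape, snocRow_shape]
    split_ifs with hs
    · rfl
    · exact (X.shape_of_le s (by omega)).symm
  · funext c r
    simp only [take_dots, snocRow_dots]
    by_cases hr : r < m
    · simp [hr, hr.ne]
    · simp [hr, dots_eq_none_of_size_le (t := X) (c := c) (show m ≤ r by omega)]

theorem snocRow_take (P : NatTableau (m + 1)) (hm : P.shape m = true)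
    (hblue : ∀ c, P.dots c m ≠ some false) : (P.take m).snocRow = P := by
  apply NatTableau.ext
  · funext s
    simp only [take_shape, snocRow_shape]
    split_ifs with hs
    · rfl
    · rcases (show s = m ∨ m + 1 ≤ s by omega) with rfl | hs'
      · exact hm.symm
      · exact (P.shape_of_le s hs').symm
  · funext c r
    simp only [take_dots, snocRow_dots]
    split_ifs with hrm hfree hr
    · subst hrm
      obtain ⟨hcm, hsc, hnored⟩ := hfree
      simp only [take_shape, take_dots, if_pos hcm] at hsc hnored
      rcases P.cover c r hsc hm hcm (by omega) with ⟨r₀, h₀, h⟩ | ⟨c₀, -, h⟩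
      · rcases h₀.lt_or_eq with h₀ | rfl
        · exact absurd h (by simpa [h₀] using hnored r₀ h₀)
        · exact h.symm
      · exact absurd h (hblue c₀)
    · subst hrm
      symm
      by_contra hd
      obtain ⟨b, hb⟩ := Option.ne_none_iff_exists'.mp hd
      cases b
      · exact hblue c hb
      · obtain ⟨hsc, -, hcr, -⟩ := mem_cells_of_dots_eq_some hb
        refine hfree ⟨hcr, by simpa [hcr] using hsc, fun r₀ hr₀ h₀ => ?_⟩
        simp only [take_dots, if_pos hr₀] at h₀
        simp [P.no_dot_below_red c r₀ r h₀ hr₀] at hb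
    · rfl
    · exact (dots_eq_none_of_size_le (by omega)).symm

theorem snocRow_dots_zero_eq_red_iff (X : NatTableau m) :
    X.snocRow.dots 0 m = some true ↔ X.RedFreeColumn 0 := by
  rw [snocRow_dots, if_pos rfl]
  split_ifs with h <;> simp [h]

theorem dots_ne_blue_of_first_column_red {t : NatTableau n} {r : ℕ}
    (h : t.dots 0 r = some true) (c : ℕ) : t.dots c r ≠ some false := by
  intro hc
  rcases Nat.eq_zero_or_pos c with rfl | hc0
  · simp [h] at hc
  · simp [t.no_dot_left_of_blue c r 0 hc hc0] at h

def snocRowEquiv : {X : NatTableau m // X.RedFreeColumn 0} ≃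
    {P : NatTableau (m + 1) // P.dots 0 m = some true} where
  toFun X := ⟨X.1.snocRow, X.1.snocRow_dots_zero_eq_red_iff.mpr X.2⟩
  invFun P := ⟨P.1.take m, by
    rw [← snocRow_dots_zero_eq_red_iff, snocRow_take P.1 (mem_cells_of_dots_eq_some P.2).2.1
      (dots_ne_blue_of_first_column_red P.2)]
    exact P.2⟩
  left_inv X := Subtype.ext (take_snocRow X.1)
  right_inv P := Subtype.ext (snocRow_take P.1 (mem_cells_of_dots_eq_some P.2).2.1
    (dots_ne_blue_of_first_column_red P.2))

theorem everyColumnHasRed_of_first_column_red {P : NatTableau (m + 1)}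
    (h : P.dots 0 m = some true) : P.EveryColumnHasRed := by
  intro c hc
  have hm := (mem_cells_of_dots_eq_some h).2.1
  have hcm : c < m := by
    by_contra hcm
    rcases (show c = m ∨ m + 1 ≤ c by omega) with rfl | hc'
    · simp [hm] at hc
    · simp [P.shape_of_le c hc'] at hc
  rcases P.cover c m hc hm hcm (by omega) with ⟨r₀, -, h₀⟩ | ⟨c₀, -, h₀⟩
  · exact ⟨r₀, h₀⟩
  · exact absurd h₀ (dots_ne_blue_of_first_column_red h c₀)

instance : Unique {P : NatTableau 1 // P.shape 0 = true} where
  default := ⟨vertical 1, rfl⟩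
  uniq P := Subtype.ext <| eq_vertical P.1 fun s => by
    rcases Nat.eq_zero_or_pos s with rfl | hs
    · exact P.2
    · exact P.1.shape_of_le s hs

def firstStepVerticalEquiv : {t : NatTableau (1 + n) // t.shape 0 = true} ≃ NatTableau n :=
  (Equiv.subtypeEquivRight fun t => by simp).trans <|
    (concatEquiv (fun P : NatTableau 1 => P.shape 0 = true) fun P h0 c hc => by
      rcases Nat.eq_zero_or_pos c with rfl | hc0
      · simp [h0] at hc
      · simp [P.shape_of_le c hc0] at hc).trans <|
      Equiv.uniqueProd _ _

def firstColumnRedEquiv (j k : ℕ) :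
    {t : NatTableau (1 + j + 1 + k) // t.dots 0 (1 + j) = some true} ≃
      NatTableau j × NatTableau k :=
  (Equiv.subtypeEquivRight fun t => by simp).trans <|
    (concatEquiv (fun P : NatTableau (1 + j + 1) => P.dots 0 (1 + j) = some true)
      fun _ => everyColumnHasRed_of_first_column_red).trans <|
      Equiv.prodCongr (snocRowEquiv.symm.trans consColumnEquiv.symm) (Equiv.refl _)

open Finset in
theorem card_eq_sum_by_first_step (n : ℕ) :
    Nat.card (NatTableau n) = Nat.card {t : NatTableau n // t.shape 0 = true} +
      Nat.card {t : NatTableau n // t.RedFreeColumn 0} +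
      ∑ r ∈ range n, Nat.card {t : NatTableau n // t.dots 0 r = some true} := by
  classical
  have := Fintype.ofFinite (NatTableau n)
  simp only [Nat.card_eq_fintype_card, Fintype.card_subtype]
  rw [← card_biUnion, ← card_union_of_disjoint, ← card_union_of_disjoint, ← card_univ]
  · congr 1
    ext t
    simp only [mem_univ, mem_union, mem_filter, mem_biUnion, mem_range, true_and, true_iff]
    by_cases hred : ∃ r, t.dots 0 r = some true
    · obtain ⟨r, hr⟩ := hred
      exact .inr ⟨r, (mem_cells_of_dots_eq_some hr).2.2.2, hr⟩
    · push Not at hred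
      cases h : t.shape 0
      · refine .inl (.inr ⟨?_, h, fun r _ => hred r⟩)
        by_contra hn
        simp [t.shape_of_le 0 (by omega)] at h
      · exact .inl (.inl rfl)
  · simp only [disjoint_left, mem_union, mem_filter, mem_biUnion, mem_univ, true_and]
    rintro t (h0 | ⟨-, -, hnored⟩) ⟨r, hrn, hr⟩
    · simp [(mem_cells_of_dots_eq_some hr).1] at h0
    · exact hnored r (mem_range.mp hrn) hr
  · simp only [disjoint_left, mem_filter, mem_univ, true_and]
    rintro t h0 ⟨-, h0', -⟩
    simp [h0] at h0'
  · intro r _ r' _ hne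
    simp only [Function.onFun, disjoint_left, mem_filter, mem_univ, true_and]
    exact fun t hr hr' => hne (red_row_unique hr hr')

theorem card_eq_catalan (n : ℕ) : Nat.card (NatTableau n) = catalan (n + 1) := by
  induction n using Nat.strong_induction_on with
  | _ n ih =>
  rcases n with _ | m
  · have : Unique (NatTableau 0) :=
      ⟨⟨vertical 0⟩, fun t => eq_vertical t fun s => t.shape_of_le s (Nat.zero_le s)⟩
    simp
  have hA : Nat.card {t : NatTableau (m + 1) // t.shape 0 = true} = catalan (m + 1) := by
    rw [Nat.add_comm m 1, Nat.card_congr firstStepVerticalEquiv, ih m (by omega), Nat.add_comm]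
  have hB : Nat.card {t : NatTableau (m + 1) // t.RedFreeColumn 0} = catalan (m + 1) := by
    rw [Nat.add_comm m 1, ← Nat.card_congr consColumnEquiv, ih m (by omega), Nat.add_comm]
  have hC₀ : Nat.card {t : NatTableau (m + 1) // t.dots 0 0 = some true} = 0 := by
    have : IsEmpty {t : NatTableau (m + 1) // t.dots 0 0 = some true} :=
      ⟨fun t => by simpa using (mem_cells_of_dots_eq_some t.2).2.2.1⟩
    exact Nat.card_of_isEmpty
  have hC : ∀ j ∈ Finset.range m,
      Nat.card {t : NatTableau (m + 1) // t.dots 0 (j + 1) = some true} =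
        catalan (j + 1) * catalan (m + 1 - (j + 1)) := by
    intro j hj
    obtain ⟨k, hk⟩ : ∃ k, m + 1 = 1 + j + 1 + k := ⟨m - 1 - j, by simp at hj; omega⟩
    rw [hk, Nat.add_comm j 1, Nat.card_congr (firstColumnRedEquiv j k), Nat.card_prod,
      ih j (by omega), ih k (by omega), Nat.add_comm 1 j]
    congr 2
    omega
  rw [card_eq_sum_by_first_step, Finset.sum_range_succ', catalan_succ,
    Fin.sum_univ_eq_sum_range (fun i => catalan i * catalan (m + 1 - i)),
    Finset.sum_range_succ, Finset.sum_range_succ', Finset.sum_congr rfl hC, hA, hB, hC₀]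
  simp only [catalan_zero, Nat.sub_zero, Nat.sub_self]
  ring

end NatTableau

instance BinaryTree.finite_numNodes_eq (n : ℕ) : Finite {t : BinaryTree Unit // t.numNodes = n} :=
  Finite.of_equiv _ (Equiv.subtypeEquivRight fun _ => BinaryTree.mem_treesOfNumNodesEq)

theorem BinaryTree.card_numNodes_eq (n : ℕ) :
    Nat.card {t : BinaryTree Unit // t.numNodes = n} = catalan n := by
  rw [← treesOfNumNodesEq_card_eq_catalan, ← Nat.card_eq_finsetCard]
  exact Nat.card_congr (Equiv.subtypeEquivRight fun _ => mem_treesOfNumNodesEq.symm)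

theorem catAltTableau_equiv_trees_general (n : ℕ) :
    Nonempty (CatAltTableau (n - 1) ≃ {t : Tree Unit // t.numNodes = n}) := by
  refine Finite.card_eq.mp ?_
  rw [← Nat.card_congr NatTableau.equivCatAltTableau, NatTableau.card_eq_catalan,
    BinaryTree.card_numNodes_eq]
  cases n <;> simp [catalan_zero, catalan_one]

/-- There is a bijection between Catalan alternative tableaux of size `n - 1` and
planar binary trees with `n` internal vertices. -/
theorem catAltTableau_equiv_trees (n : ℕ) (hn : 1 ≤ n) :
    Nonempty (CatAltTableau (n - 1) ≃ {t : Tree Unit // t.numNodes = n}) :=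
  catAltTableau_equiv_trees_general n
end

section
/- If two permutations σ, τ ∈ S_n map to the same binary tree under the projection Ψ (forgetting labels of the increasing binary tree of the permutation), then σ and τ have the same Up-Down sequence, i.e., for every i with 1 ≤ i ≤ n−1, σ(i+1) > σ(i) if and only if τ(i+1) > τ(i). -/
/-- Auxiliary recursion (on a fuel bounding the length): the unlabeled binary tree of a
word of distinct integers, obtained by putting the position of the minimum at the root,
with left subtree built from the prefix before the minimum and right subtree from the
suffix after it. -/
def shapeOfAux : ℕ → List ℕ → Tree Unit
  | 0, _ => Tree.nil
  | fuel + 1, l =>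
    if l = [] then Tree.nil
    else
      let m := l.min?.getD 0
      let i := l.idxOf m
      Tree.node () (shapeOfAux fuel (l.take i)) (shapeOfAux fuel (l.drop (i + 1)))

/-- The unlabeled binary tree underlying the increasing binary tree of a word. -/
def shapeOfList (l : List ℕ) : Tree Unit := shapeOfAux l.length l

/-- `Ψ : S_n → Y_n` sends a permutation to the underlying unlabeled binary tree of its
increasing binary tree. -/
def Psi {n : ℕ} (σ : Equiv.Perm (Fin n)) : Tree Unit :=
  shapeOfList (List.ofFn fun i => (σ i : ℕ))

/-!
The root of `Ψ σ` sits at the position of the minimum of `σ`, and the size of its left subtree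
is that position. So if `Ψ σ = Ψ τ`, the minima of `σ` and `τ` sit at the same place `m`, both
words descend into `m` and ascend out of it, and the words before `m` (resp. after `m`) again
have equal shapes; induction on the length handles the steps away from `m`.
-/

namespace List

def minPos (l : List ℕ) : ℕ := l.idxOf (l.min?.getD 0)

variable {l : List ℕ}

theorem min?_getD_eq_min (hl : l ≠ []) : l.min?.getD 0 = l.min hl := by
  rw [min?_eq_some_min hl]
  rfl

theorem minPos_lt_length (hl : l ≠ []) : l.minPos < l.length := by
  rw [minPos, idxOf_lt_length_iff, min?_getD_eq_min hl]
  exact min_mem hl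

theorem getElem_lt_getElem_of_eq_minPos (hnd : l.Nodup) {i k : ℕ} (hi : i < l.length)
    (hk : k < l.length) (him : i = l.minPos) (hkm : k ≠ l.minPos) : l[i] < l[k] := by
  have hl : l ≠ [] := ne_nil_of_length_pos (by omega)
  have hmin : l[i] = l.min hl := by
    simp only [him, minPos, min?_getD_eq_min hl]
    exact getElem_idxOf _
  refine lt_of_le_of_ne (hmin ▸ min_le_of_mem (getElem_mem hk)) fun heq => hkm ?_
  rw [← him]
  exact (hnd.getElem_inj_iff.1 heq).symm

end List

open List

section Shape

variable {l l₁ l₂ : List ℕ}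

theorem shapeOfAux_succ_of_ne_nil (f : ℕ) (hl : l ≠ []) :
    shapeOfAux (f + 1) l =
      .node () (shapeOfAux f (l.take l.minPos)) (shapeOfAux f (l.drop (l.minPos + 1))) := by
  simp only [shapeOfAux, if_neg hl]
  rfl

theorem shapeOfAux_eq_shapeOfAux :
    ∀ {f g : ℕ} {l : List ℕ}, l.length ≤ f → l.length ≤ g → shapeOfAux f l = shapeOfAux g l
  | 0, g, l, hf, _ => by
    rw [length_eq_zero_iff.1 (Nat.le_zero.1 hf)]
    cases g <;> rfl
  | f + 1, 0, l, _, hg => by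
    rw [length_eq_zero_iff.1 (Nat.le_zero.1 hg)]
    rfl
  | f + 1, g + 1, l, hf, hg => by
    rcases eq_or_ne l [] with rfl | hl
    · rfl
    · have := minPos_lt_length hl
      rw [shapeOfAux_succ_of_ne_nil f hl, shapeOfAux_succ_of_ne_nil g hl]
      congr 1 <;> apply shapeOfAux_eq_shapeOfAux <;> simp only [length_take, length_drop] <;> omega

theorem shapeOfList_of_ne_nil (hl : l ≠ []) :
    shapeOfList l =
      .node () (shapeOfList (l.take l.minPos)) (shapeOfList (l.drop (l.minPos + 1))) := by
  obtain ⟨f, hf⟩ := Nat.exists_eq_add_one.2 (length_pos_iff.2 hl)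
  have := minPos_lt_length hl
  rw [shapeOfList, hf, shapeOfAux_succ_of_ne_nil f hl]
  congr 1 <;> apply shapeOfAux_eq_shapeOfAux <;> simp only [length_take, length_drop] <;> omega

theorem numNodes_shapeOfList (l : List ℕ) : BinaryTree.numNodes (shapeOfList l) = l.length := by
  rcases eq_or_ne l [] with rfl | hl
  · rfl
  · have := minPos_lt_length hl
    rw [shapeOfList_of_ne_nil hl, BinaryTree.numNodes, numNodes_shapeOfList,
      numNodes_shapeOfList, length_take, length_drop]
    omega
termination_by l.length
decreasing_by all_goals simp only [length_take, length_drop]; omega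

theorem length_eq_of_shapeOfList_eq (h : shapeOfList l₁ = shapeOfList l₂) :
    l₁.length = l₂.length := by
  rw [← numNodes_shapeOfList, h, numNodes_shapeOfList]

theorem minPos_eq_and_subtrees_eq_of_shapeOfList_eq (h : shapeOfList l₁ = shapeOfList l₂)
    (hl₁ : l₁ ≠ []) :
    l₂.minPos = l₁.minPos ∧
      shapeOfList (l₁.take l₁.minPos) = shapeOfList (l₂.take l₁.minPos) ∧
      shapeOfList (l₁.drop (l₁.minPos + 1)) = shapeOfList (l₂.drop (l₁.minPos + 1)) := by
  have hl₂ : l₂ ≠ [] := by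
    rw [← length_pos_iff, ← length_eq_of_shapeOfList_eq h]
    exact length_pos_iff.2 hl₁
  rw [shapeOfList_of_ne_nil hl₁, shapeOfList_of_ne_nil hl₂, BinaryTree.node.injEq] at h
  obtain ⟨-, hleft, hright⟩ := h
  have hpos : l₂.minPos = l₁.minPos := by
    have hsize := length_eq_of_shapeOfList_eq hleft
    simp only [length_take] at hsize
    have := minPos_lt_length hl₁
    have := minPos_lt_length hl₂
    omega
  rw [hpos] at hleft hright
  exact ⟨hpos, hleft, hright⟩

end Shape

theorem getElem_lt_getElem_succ_iff_of_shapeOfList_eq {l₁ l₂ : List ℕ} (hnd₁ : l₁.Nodup)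
    (hnd₂ : l₂.Nodup) (h : shapeOfList l₁ = shapeOfList l₂) {j : ℕ} (hj₁ : j + 1 < l₁.length)
    (hj₂ : j + 1 < l₂.length) : l₁[j] < l₁[j + 1] ↔ l₂[j] < l₂[j + 1] := by
  have hl₁ : l₁ ≠ [] := ne_nil_of_length_pos (by omega)
  obtain ⟨hpos, hleft, hright⟩ := minPos_eq_and_subtrees_eq_of_shapeOfList_eq h hl₁
  have hm := minPos_lt_length hl₁
  rcases lt_trichotomy (j + 1) l₁.minPos with hlt | heq | hgt
  · have := getElem_lt_getElem_succ_iff_of_shapeOfList_eq (hnd₁.sublist (take_sublist _ _))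
      (hnd₂.sublist (take_sublist _ _)) hleft (j := j)
      (by simp only [length_take]; omega) (by simp only [length_take]; omega)
    simpa only [getElem_take] using this
  · exact iff_of_false
      (not_lt.2 (getElem_lt_getElem_of_eq_minPos hnd₁ _ _ heq (by omega)).le)
      (not_lt.2 (getElem_lt_getElem_of_eq_minPos hnd₂ _ _ (hpos ▸ heq) (by omega)).le)
  · rcases eq_or_lt_of_le (Nat.le_of_lt_succ hgt) with heq | hlt
    · exact iff_of_true
        (getElem_lt_getElem_of_eq_minPos hnd₁ _ _ heq.symm (by omega))
        (getElem_lt_getElem_of_eq_minPos hnd₂ _ _ (hpos ▸ heq.symm) (by omega))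
    · obtain ⟨k, rfl⟩ := Nat.exists_eq_add_of_le (Nat.succ_le_of_lt hlt)
      have := getElem_lt_getElem_succ_iff_of_shapeOfList_eq (hnd₁.sublist (drop_sublist _ _))
        (hnd₂.sublist (drop_sublist _ _)) hright (j := k)
        (by simp only [length_drop]; omega) (by simp only [length_drop]; omega)
      simpa only [getElem_drop, Nat.succ_eq_add_one, Nat.add_assoc] using this
termination_by l₁.length
decreasing_by all_goals simp only [length_take, length_drop]; omega

/-- If two permutations `σ, τ ∈ S_n` project to the same binary tree under `Ψ`, then
they have the same Up-Down sequence: for all `1 ≤ i ≤ n-1`,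
`σ(i+1) > σ(i) ↔ τ(i+1) > τ(i)`. -/
theorem updown_eq_of_psi_eq {n : ℕ} (σ τ : Equiv.Perm (Fin n)) (h : Psi σ = Psi τ) :
    ∀ i : ℕ, (hi : i + 1 < n) →
      (σ ⟨i, Nat.lt_of_succ_lt hi⟩ < σ ⟨i + 1, hi⟩ ↔
        τ ⟨i, Nat.lt_of_succ_lt hi⟩ < τ ⟨i + 1, hi⟩) := by
  intro i hi
  have hnd (π : Equiv.Perm (Fin n)) : (List.ofFn fun k => (π k : ℕ)).Nodup :=
    nodup_ofFn.2 (Fin.val_injective.comp π.injective)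
  have hlen (π : Equiv.Perm (Fin n)) : i + 1 < (List.ofFn fun k => (π k : ℕ)).length := by
    simpa using hi
  have := getElem_lt_getElem_succ_iff_of_shapeOfList_eq (hnd σ) (hnd τ) h (hlen σ) (hlen τ)
  simp only [List.getElem_ofFn] at this
  exact Fin.lt_def.trans (this.trans Fin.lt_def.symm)
end

section
/- The # product on binary trees, defined via gluing Catalan alternative tableaux corner-to-corner, is associative: (T_1 # T_2) # T_3 = T_1 # (T_2 # T_3) for all binary trees T_1, T_2, T_3. -/
/-- `C` is a gluing of `C₁` and `C₂` corner-to-corner: the shape of `C` is the shape of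
`C₁` followed by the shape of `C₂`, the dots of `C` in the cells of the `C₁`-region
(steps `< a`) are those of `C₁`, and the dots in the cells of the `C₂`-region
(steps `≥ a`) are those of `C₂`; the dots in the remaining rectangular region (columns
from `C₁`, rows from `C₂`) are arbitrary (subject to validity of `C`).  The `#` product
`T₁ # T₂` of the corresponding binary trees is the sum of the trees of all such `C`. -/
def IsGlue {a b : ℕ} (C₁ : CatAltTableau a) (C₂ : CatAltTableau b)
    (C : CatAltTableau (a + b)) : Prop :=
  C.shape = Fin.append C₁.shape C₂.shape ∧
  (∀ c r : Fin a, C.dots (Fin.castAdd b c) (Fin.castAdd b r) = C₁.dots c r) ∧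
  (∀ c r : Fin b, C.dots (Fin.natAdd a c) (Fin.natAdd a r) = C₂.dots c r)

private theorem CatAltTableau.shape_congr {n : ℕ} (C : CatAltTableau n) {i i' : Fin n}
    (hi : i.1 = i'.1) : C.shape i = C.shape i' := by rw [Fin.ext hi]

private theorem CatAltTableau.dots_congr {n : ℕ} (C : CatAltTableau n) {i j i' j' : Fin n}
    (hi : i.1 = i'.1) (hj : j.1 = j'.1) : C.dots i j = C.dots i' j' := by
  rw [Fin.ext hi, Fin.ext hj]

/-- Restriction of a tableau to the steps in the interval `[s, s+m)`. -/
private def CatAltTableau.restrict {n : ℕ} (C : CatAltTableau n) (s m : ℕ)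
    (h : s + m ≤ n) : CatAltTableau m where
  shape i := C.shape ⟨s + i.1, by have := i.isLt; omega⟩
  dots i j := C.dots ⟨s + i.1, by have := i.isLt; omega⟩ ⟨s + j.1, by have := j.isLt; omega⟩
  dots_mem_cells c r hcr := by
    obtain ⟨h1, h2, h3⟩ := C.dots_mem_cells _ _ hcr
    refine ⟨h1, h2, ?_⟩
    have h3' : s + c.1 < s + r.1 := h3
    exact show c.1 < r.1 by omega
  no_dot_below_red c r r' hd hlt :=
    C.no_dot_below_red _ _ _ hd (show s + r.1 < s + r'.1 by
      have : r.1 < r'.1 := hlt; omega)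
  no_dot_left_of_blue c r c' hd hlt :=
    C.no_dot_left_of_blue _ _ _ hd (show s + c'.1 < s + c.1 by
      have : c'.1 < c.1 := hlt; omega)
  cover c r hc hr hcr := by
    have hcr' : (⟨s + c.1, by have := c.isLt; omega⟩ : Fin n)
        < ⟨s + r.1, by have := r.isLt; omega⟩ := by
      have : c.1 < r.1 := hcr
      exact show s + c.1 < s + r.1 by omega
    rcases C.cover _ _ hc hr hcr' with ⟨r₀, hle, hd⟩ | ⟨c₀, hle, hd⟩
    · have hm := C.dots_mem_cells _ _ (show C.dots _ r₀ ≠ none by rw [hd]; simp)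
      have hlt : s + c.1 < r₀.1 := hm.2.2
      have hle' : r₀.1 ≤ s + r.1 := hle
      have hrm := r.isLt
      refine Or.inl ⟨⟨r₀.1 - s, by omega⟩, show r₀.1 - s ≤ r.1 by omega, ?_⟩
      exact (C.dots_congr rfl (show s + (r₀.1 - s) = r₀.1 by omega)).trans hd
    · have hm := C.dots_mem_cells _ _ (show C.dots c₀ _ ≠ none by rw [hd]; simp)
      have hlt : c₀.1 < s + r.1 := hm.2.2
      have hle' : s + c.1 ≤ c₀.1 := hle
      have hrm := r.isLt
      refine Or.inr ⟨⟨c₀.1 - s, by omega⟩, show c.1 ≤ c₀.1 - s by omega, ?_⟩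
      exact (C.dots_congr (show s + (c₀.1 - s) = c₀.1 by omega) rfl).trans hd

/-- Pointwise characterization of being a gluing. -/
private theorem isGlue_iff {a b : ℕ} (C₁ : CatAltTableau a) (C₂ : CatAltTableau b)
    (C : CatAltTableau (a + b)) :
    IsGlue C₁ C₂ C ↔
      ((∀ i : Fin a, C.shape ⟨i.1, by have := i.isLt; omega⟩ = C₁.shape i) ∧
       (∀ i : Fin b, C.shape ⟨a + i.1, by have := i.isLt; omega⟩ = C₂.shape i) ∧
       (∀ x y : Fin a, C.dots ⟨x.1, by have := x.isLt; omega⟩ ⟨y.1, by have := y.isLt; omega⟩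
          = C₁.dots x y) ∧
       (∀ x y : Fin b, C.dots ⟨a + x.1, by have := x.isLt; omega⟩
          ⟨a + y.1, by have := y.isLt; omega⟩ = C₂.dots x y)) := by
  constructor
  · rintro ⟨hs, hd1, hd2⟩
    refine ⟨fun i => ?_, fun i => ?_, fun x y => hd1 x y, fun x y => hd2 x y⟩
    · rw [hs]; exact Fin.append_left _ _ i
    · rw [hs]; exact Fin.append_right _ _ i
  · rintro ⟨h1, h2, h3, h4⟩
    refine ⟨funext fun i => ?_, fun x y => h3 x y, fun x y => h4 x y⟩
    by_cases hi : i.1 < a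
    · have e : i = Fin.castAdd b ⟨i.1, hi⟩ := Fin.ext rfl
      rw [e, Fin.append_left]
      exact h1 ⟨i.1, hi⟩
    · have e : i = Fin.natAdd a ⟨i.1 - a, by have := i.isLt; omega⟩ :=
        Fin.ext (show i.1 = a + (i.1 - a) by omega)
      rw [e, Fin.append_right]
      exact h2 ⟨i.1 - a, by have := i.isLt; omega⟩

private theorem cast_shape {n m : ℕ} (h : n = m) (C : CatAltTableau n) (i : Fin m) :
    (h ▸ C).shape i = C.shape ⟨i.1, by omega⟩ := by subst h; rfl

private theorem cast_dots {n m : ℕ} (h : n = m) (C : CatAltTableau n) (i j : Fin m) :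
    (h ▸ C).dots i j = C.dots ⟨i.1, by omega⟩ ⟨j.1, by omega⟩ := by subst h; rfl

/-- The `#` product is associative: the summands of `(T₁ # T₂) # T₃` and of
`T₁ # (T₂ # T₃)` coincide (stated at the level of the corresponding Catalan alternative
tableaux, transported along the identification of sizes `(a+b)+c = a+(b+c)`). -/
theorem glue_assoc {a b c : ℕ} (C₁ : CatAltTableau a) (C₂ : CatAltTableau b)
    (C₃ : CatAltTableau c) (C : CatAltTableau (a + b + c)) :
    (∃ D : CatAltTableau (a + b), IsGlue C₁ C₂ D ∧ IsGlue D C₃ C) ↔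
    (∃ E : CatAltTableau (b + c), IsGlue C₂ C₃ E ∧
      IsGlue C₁ E (Nat.add_assoc a b c ▸ C)) := by
  constructor
  · rintro ⟨D, hD, hC⟩
    rw [isGlue_iff] at hD hC
    obtain ⟨hD1, hD2, hD3, hD4⟩ := hD
    obtain ⟨hC1, hC2, hC3, hC4⟩ := hC
    refine ⟨C.restrict a (b + c) (by omega), ?_, ?_⟩
    · rw [isGlue_iff]
      refine ⟨fun i => ?_, fun i => ?_, fun x y => ?_, fun x y => ?_⟩
      · exact (hC1 ⟨a + i.1, by have := i.isLt; omega⟩).trans (hD2 i)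
      · exact (C.shape_congr (show a + (b + i.1) = a + b + i.1 by omega)).trans (hC2 i)
      · exact (hC3 ⟨a + x.1, by have := x.isLt; omega⟩ ⟨a + y.1, by have := y.isLt; omega⟩).trans
          (hD4 x y)
      · exact (C.dots_congr (show a + (b + x.1) = a + b + x.1 by omega)
          (show a + (b + y.1) = a + b + y.1 by omega)).trans (hC4 x y)
    · rw [isGlue_iff]
      refine ⟨fun i => ?_, fun i => ?_, fun x y => ?_, fun x y => ?_⟩
      · exact (cast_shape _ C _).trans
          ((hC1 ⟨i.1, by have := i.isLt; omega⟩).trans (hD1 i))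
      · exact (cast_shape _ C _).trans (C.shape_congr rfl)
      · exact (cast_dots _ C _ _).trans
          ((hC3 ⟨x.1, by have := x.isLt; omega⟩ ⟨y.1, by have := y.isLt; omega⟩).trans (hD3 x y))
      · exact (cast_dots _ C _ _).trans (C.dots_congr rfl rfl)
  · rintro ⟨E, hE, hC'⟩
    rw [isGlue_iff] at hE hC'
    obtain ⟨hE1, hE2, hE3, hE4⟩ := hE
    obtain ⟨hC1, hC2, hC3, hC4⟩ := hC'
    refine ⟨C.restrict 0 (a + b) (by omega), ?_, ?_⟩
    · rw [isGlue_iff]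
      refine ⟨fun i => ?_, fun i => ?_, fun x y => ?_, fun x y => ?_⟩
      · exact (C.shape_congr (show 0 + i.1 = i.1 by omega)).trans
          (((cast_shape (Nat.add_assoc a b c) C ⟨i.1, by have := i.isLt; omega⟩).symm).trans
            (hC1 i))
      · exact (C.shape_congr (show 0 + (a + i.1) = a + i.1 by omega)).trans
          (((cast_shape (Nat.add_assoc a b c) C ⟨a + i.1, by have := i.isLt; omega⟩).symm).trans
            ((hC2 ⟨i.1, by have := i.isLt; omega⟩).trans (hE1 i)))
      · exact (C.dots_congr (show 0 + x.1 = x.1 by omega) (show 0 + y.1 = y.1 by omega)).trans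
          (((cast_dots (Nat.add_assoc a b c) C ⟨x.1, by have := x.isLt; omega⟩
              ⟨y.1, by have := y.isLt; omega⟩).symm).trans (hC3 x y))
      · exact (C.dots_congr (show 0 + (a + x.1) = a + x.1 by omega)
            (show 0 + (a + y.1) = a + y.1 by omega)).trans
          (((cast_dots (Nat.add_assoc a b c) C ⟨a + x.1, by have := x.isLt; omega⟩
              ⟨a + y.1, by have := y.isLt; omega⟩).symm).trans
            ((hC4 ⟨x.1, by have := x.isLt; omega⟩ ⟨y.1, by have := y.isLt; omega⟩).trans
              (hE3 x y)))
    · rw [isGlue_iff]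
      refine ⟨fun i => ?_, fun i => ?_, fun x y => ?_, fun x y => ?_⟩
      · exact (C.shape_congr (show i.1 = 0 + i.1 by omega))
      · exact (C.shape_congr (show a + b + i.1 = a + (b + i.1) by omega)).trans
          (((cast_shape (Nat.add_assoc a b c) C
              ⟨a + (b + i.1), by have := i.isLt; omega⟩).symm).trans
            ((hC2 ⟨b + i.1, by have := i.isLt; omega⟩).trans (hE2 i)))
      · exact (C.dots_congr (show x.1 = 0 + x.1 by omega) (show y.1 = 0 + y.1 by omega))
      · exact (C.dots_congr (show a + b + x.1 = a + (b + x.1) by omega)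
            (show a + b + y.1 = a + (b + y.1) by omega)).trans
          (((cast_dots (Nat.add_assoc a b c) C ⟨a + (b + x.1), by have := x.isLt; omega⟩
              ⟨a + (b + y.1), by have := y.isLt; omega⟩).symm).trans
            ((hC4 ⟨b + x.1, by have := x.isLt; omega⟩ ⟨b + y.1, by have := y.isLt; omega⟩).trans
              (hE4 x y)))
end
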